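/- arXiv:2004.13813 — 6 statements merged into one kernel-verified Lean document; each statement's English description precedes it below -/
import Mathlib

section
/- Let p be a prime and let x, y, z ∈ ℤ_p. The ℤ_p-submodule of ℤ_p[t]/(t³) spanned by the three elements x·t², y·t² + z·t, and 1 is closed under multiplication (i.e., contains the product of any two of its elements) if and only if z² ∈ x·ℤ_p (equivalently, ‖z‖² ≤ ‖x‖ when x ≠ 0). -/
open Polynomial

/-- `ℤ_p[t]/(t³)`. -/
abbrev PadicTrunc (p : ℕ) [Fact p.Prime] : Type :=
  ℤ_[p][X] ⧸ Ideal.span ({X ^ 3} : Set ℤ_[p][X])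

/-- The image `t` of the variable `X` in `ℤ_p[t]/(t³)`. -/
noncomputable def tcls (p : ℕ) [Fact p.Prime] : PadicTrunc p :=
  Ideal.Quotient.mk _ X

set_option maxHeartbeats 1000000 in
theorem stmt1 (p : ℕ) [Fact p.Prime] (x y z : ℤ_[p]) :
    (∀ u ∈ Submodule.span ℤ_[p]
        ({x • tcls p ^ 2, y • tcls p ^ 2 + z • tcls p, 1} : Set (PadicTrunc p)),
      ∀ v ∈ Submodule.span ℤ_[p]
        ({x • tcls p ^ 2, y • tcls p ^ 2 + z • tcls p, 1} : Set (PadicTrunc p)),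
      u * v ∈ Submodule.span ℤ_[p]
        ({x • tcls p ^ 2, y • tcls p ^ 2 + z • tcls p, 1} : Set (PadicTrunc p))) ↔
    x ∣ z ^ 2 := by
  set I : Ideal ℤ_[p][X] := Ideal.span ({X ^ 3} : Set ℤ_[p][X]) with hI
  set mk' : ℤ_[p][X] →ₐ[ℤ_[p]] PadicTrunc p := Ideal.Quotient.mkₐ ℤ_[p] I with hmk
  have htc : tcls p = mk' X := rfl
  have ht3 : tcls p ^ 3 = 0 := by
    rw [htc, ← map_pow]
    exact Ideal.Quotient.eq_zero_iff_mem.mpr (Ideal.subset_span rfl)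
  set S : Set (PadicTrunc p) :=
    {x • tcls p ^ 2, y • tcls p ^ 2 + z • tcls p, 1} with hS
  constructor
  · intro h
    have hg2 : y • tcls p ^ 2 + z • tcls p ∈ Submodule.span ℤ_[p] S :=
      Submodule.subset_span (by simp [hS])
    have hm := h _ hg2 _ hg2
    rw [hS, show ({x • tcls p ^ 2, y • tcls p ^ 2 + z • tcls p, 1} : Set (PadicTrunc p)) =
      insert (x • tcls p ^ 2) (insert (y • tcls p ^ 2 + z • tcls p) {1}) from rfl] at hm
    rw [Submodule.mem_span_insert] at hm
    obtain ⟨a, w, hw, hm⟩ := hm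
    rw [Submodule.mem_span_insert] at hw
    obtain ⟨b, w2, hw2, hw⟩ := hw
    rw [Submodule.mem_span_singleton] at hw2
    obtain ⟨c, hc⟩ := hw2
    subst hc hw
    -- hm : (y • t^2 + z • t) * (y • t^2 + z • t) = a • (x • t^2) + (b • (y • t^2 + z • t) + c • 1)
    have hsm : ∀ (r : ℤ_[p]) (q : ℤ_[p][X]), r • mk' q = mk' (C r * q) := by
      intro r q
      rw [← map_smul, Polynomial.smul_eq_C_mul]
    simp only [htc, ← map_pow, hsm, ← map_mul, ← map_add, ← map_one mk'] at hm
    rw [hmk, Ideal.Quotient.mkₐ_eq_mk, Ideal.Quotient.eq, hI, Ideal.mem_span_singleton] at hm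
    set P : ℤ_[p][X] := C y * X ^ 2 + C z * X with hP
    have e' : (X : ℤ_[p][X]) ^ 3 ∣
        C (z ^ 2 - a * x - b * y) * X ^ 2 - C (b * z) * X - C c := by
      have h2 : (X : ℤ_[p][X]) ^ 3 ∣ X ^ 3 * (C (y ^ 2) * X + 2 * C (y * z)) :=
        Dvd.intro _ rfl
      have heq : C (z ^ 2 - a * x - b * y) * X ^ 2 - C (b * z) * X - C c =
          (P * P - (C a * (C x * X ^ 2) + (C b * P + C c * 1))) -
            X ^ 3 * (C (y ^ 2) * X + 2 * C (y * z)) := by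
        rw [hP]; simp only [C_sub, C_mul, C_pow]; ring
      rw [heq]; exact dvd_sub hm h2
    rw [X_pow_dvd_iff] at e'
    have e1 := e' 1 (by norm_num)
    have e2 := e' 2 (by norm_num)
    simp only [coeff_sub, coeff_C_mul, coeff_X_pow, coeff_X, coeff_C] at e1 e2
    norm_num at e1 e2
    rcases e1 with hb | hz
    · refine ⟨a, ?_⟩
      rw [hb] at e2
      linear_combination e2
    · exact ⟨0, by rw [hz]; ring⟩
  · intro ⟨a, ha⟩ u hu v hv
    have key : ∀ g ∈ S, ∀ w ∈ Submodule.span ℤ_[p] S, g * w ∈ Submodule.span ℤ_[p] S := by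
      intro g hg w hw
      induction hw using Submodule.span_induction with
      | mem w hwm =>
        have hmem : ∀ s ∈ S, s ∈ Submodule.span ℤ_[p] S := fun s hs => Submodule.subset_span hs
        have h1 : (x • tcls p ^ 2) ∈ Submodule.span ℤ_[p] S := hmem _ (by simp [hS])
        have h2 : (y • tcls p ^ 2 + z • tcls p) ∈ Submodule.span ℤ_[p] S := hmem _ (by simp [hS])
        have h3 : (1 : PadicTrunc p) ∈ Submodule.span ℤ_[p] S := hmem _ (by simp [hS])
        have halg : ∀ (r : ℤ_[p]) (u : PadicTrunc p), r • u = algebraMap ℤ_[p] _ r * u :=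
          fun r u => Algebra.smul_def r u
        rcases hg with hg | hg | hg <;> rcases hwm with hw' | hw' | hw' <;>
            subst hg <;> subst hw'
        · have : (x • tcls p ^ 2) * (x • tcls p ^ 2) = 0 := by
            simp only [halg]
            linear_combination (algebraMap ℤ_[p] (PadicTrunc p) x *
              algebraMap ℤ_[p] (PadicTrunc p) x * tcls p) * ht3
          rw [this]; exact Submodule.zero_mem _
        · have : (x • tcls p ^ 2) * (y • tcls p ^ 2 + z • tcls p) = 0 := by
            simp only [halg]
            linear_combination (algebraMap ℤ_[p] (PadicTrunc p) x *
              (algebraMap ℤ_[p] (PadicTrunc p) y * tcls p +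
                algebraMap ℤ_[p] (PadicTrunc p) z)) * ht3
          rw [this]; exact Submodule.zero_mem _
        · rw [mul_one]; exact h1
        · have : (y • tcls p ^ 2 + z • tcls p) * (x • tcls p ^ 2) = 0 := by
            simp only [halg]
            linear_combination (algebraMap ℤ_[p] (PadicTrunc p) x *
              (algebraMap ℤ_[p] (PadicTrunc p) y * tcls p +
                algebraMap ℤ_[p] (PadicTrunc p) z)) * ht3
          rw [this]; exact Submodule.zero_mem _
        · have : (y • tcls p ^ 2 + z • tcls p) * (y • tcls p ^ 2 + z • tcls p) =
              a • (x • tcls p ^ 2) := by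
            simp only [halg]
            have hz2 : algebraMap ℤ_[p] (PadicTrunc p) (z ^ 2) =
                algebraMap ℤ_[p] (PadicTrunc p) (x * a) := by rw [ha]
            simp only [map_mul, map_pow] at hz2
            linear_combination (algebraMap ℤ_[p] (PadicTrunc p) y *
              algebraMap ℤ_[p] (PadicTrunc p) y * tcls p +
              2 * algebraMap ℤ_[p] (PadicTrunc p) y *
                algebraMap ℤ_[p] (PadicTrunc p) z) * ht3 + tcls p ^ 2 * hz2
          rw [this]; exact Submodule.smul_mem _ _ h1
        · rw [mul_one]; exact h2
        · rw [one_mul]; exact h1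
        · rw [one_mul]; exact h2
        · rw [one_mul]; exact h3
      | zero => simp
      | add w1 w2 _ _ ih1 ih2 => rw [mul_add]; exact Submodule.add_mem _ ih1 ih2
      | smul r w _ ih => rw [mul_smul_comm]; exact Submodule.smul_mem _ _ ih
    induction hu using Submodule.span_induction with
    | mem u hum => exact key _ hum _ hv
    | zero => simp
    | add u1 u2 _ _ ih1 ih2 => rw [add_mul]; exact Submodule.add_mem _ ih1 ih2
    | smul r u _ ih => rw [smul_mul_assoc]; exact Submodule.smul_mem _ _ ih
end

section
/- Let p be a prime and s₁, s₂ real numbers with s₁ > 2 and s₂ > 2. Set X = p^{−s₁} and Y = p^{−s₂}. Then (1 − p⁻¹)⁻² times the integral over {(x,y,z) ∈ ℤ_p³ : ‖z‖ ≤ ‖y‖ ≤ ‖x‖} of ‖x‖^{s₂−2}·‖z‖^{s₁−1} with respect to μ³ equals (1 − p⁻¹) / ((1 − X)(1 − p⁻¹X)(1 − XY)). -/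
/-!
Sort the points of the region by the valuations `a ≤ b ≤ c` of `x, y, z`; the points with `z = 0`
do not matter, the integrand vanishes there. On each product of three spheres the integrand is
constant, and the sphere of radius `p⁻ⁿ` has measure `(1 - p⁻¹) p⁻ⁿ` because the ball of that radius
is an additive subgroup of index `pⁿ`. Writing `b = a + i` and `c = a + i + j`, the sum over
`(a, i, j) ∈ ℕ³` factors into three geometric series, with ratios `XY`, `p⁻¹X` and `X`.
-/

open MeasureTheory Metric Set Function

lemma tsum_geometric_prod_three {K : Type*} [NormedField K] [CompleteSpace K] {ξ₁ ξ₂ ξ₃ : K}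
    (h₁ : ‖ξ₁‖ < 1) (h₂ : ‖ξ₂‖ < 1) (h₃ : ‖ξ₃‖ < 1) :
    ∑' n : ℕ × ℕ × ℕ, ξ₁ ^ n.1 * (ξ₂ ^ n.2.1 * ξ₃ ^ n.2.2) =
      (1 - ξ₁)⁻¹ * ((1 - ξ₂)⁻¹ * (1 - ξ₃)⁻¹) := by
  have s₂₃ := (summable_norm_geometric_of_norm_lt_one h₂).mul_norm
    (summable_norm_geometric_of_norm_lt_one h₃)
  rw [← tsum_geometric_of_norm_lt_one h₁, ← tsum_geometric_of_norm_lt_one h₂,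
    ← tsum_geometric_of_norm_lt_one h₃, tsum_mul_tsum_of_summable_norm
      (summable_norm_geometric_of_norm_lt_one h₂) (summable_norm_geometric_of_norm_lt_one h₃),
    tsum_mul_tsum_of_summable_norm (summable_norm_geometric_of_norm_lt_one h₁) s₂₃]

namespace PadicInt
variable {p : ℕ} [Fact p.Prime]

lemma norm_eq_inv_pow_valuation {x : ℤ_[p]} (hx : x ≠ 0) :
    ‖x‖ = (p : ℝ)⁻¹ ^ x.valuation := by
  rw [norm_eq_zpow_neg_valuation hx, zpow_neg, zpow_natCast, inv_pow]

lemma inv_prime_pos : 0 < (p : ℝ)⁻¹ := by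
  have := (Fact.out : p.Prime).pos
  positivity

lemma inv_prime_lt_one : (p : ℝ)⁻¹ < 1 :=
  inv_lt_one_of_one_lt₀ (by exact_mod_cast (Fact.out : p.Prime).one_lt)

lemma inv_prime_rpow_lt_one {γ : ℝ} (hγ : 0 < γ) : (p : ℝ)⁻¹ ^ γ < 1 :=
  Real.rpow_lt_one inv_prime_pos.le inv_prime_lt_one hγ

lemma norm_le_norm_iff_valuation_le {x y : ℤ_[p]} (hx : x ≠ 0) (hy : y ≠ 0) :
    ‖x‖ ≤ ‖y‖ ↔ y.valuation ≤ x.valuation := by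
  rw [norm_eq_inv_pow_valuation hx, norm_eq_inv_pow_valuation hy,
    pow_le_pow_iff_right_of_lt_one₀ inv_prime_pos inv_prime_lt_one]

lemma ball_inv_pow_eq_closedBall (n : ℕ) :
    ball (0 : ℤ_[p]) ((p : ℝ)⁻¹ ^ n) = closedBall 0 ((p : ℝ)⁻¹ ^ (n + 1)) := by
  ext x
  rw [mem_ball_zero_iff, mem_closedBall_zero_iff, inv_pow, inv_pow, ← zpow_natCast,
    ← zpow_natCast, ← zpow_neg, ← zpow_neg, norm_le_pow_iff_norm_lt_pow_add_one]
  push_cast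
  ring_nf

lemma closedBall_inv_pow_eq_ker (n : ℕ) :
    closedBall (0 : ℤ_[p]) ((p : ℝ)⁻¹ ^ n) =
      ((toZModPow n : ℤ_[p] →+* ZMod (p ^ n)).toAddMonoidHom.ker : Set ℤ_[p]) := by
  ext x
  rw [mem_closedBall_zero_iff, inv_pow, ← zpow_natCast, ← zpow_neg, norm_le_pow_iff_mem_span_pow,
    ← ker_toZModPow]
  rfl

variable (p) in
def normChain : Set (ℤ_[p] × ℤ_[p] × ℤ_[p]) := {w | ‖w.2.2‖ ≤ ‖w.2.1‖ ∧ ‖w.2.1‖ ≤ ‖w.1‖}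

variable (p) in
def sphereTriple (n : ℕ × ℕ × ℕ) : Set (ℤ_[p] × ℤ_[p] × ℤ_[p]) :=
  sphere 0 ((p : ℝ)⁻¹ ^ n.1) ×ˢ sphere 0 ((p : ℝ)⁻¹ ^ (n.1 + n.2.1)) ×ˢ
    sphere 0 ((p : ℝ)⁻¹ ^ (n.1 + n.2.1 + n.2.2))

lemma sphereTriple_subset_normChain (n : ℕ × ℕ × ℕ) : sphereTriple p n ⊆ normChain p := by
  rintro w ⟨hx, hy, hz⟩
  rw [mem_sphere_zero_iff_norm] at hx hy hz
  have h {m k : ℕ} (hmk : m ≤ k) : (p : ℝ)⁻¹ ^ k ≤ (p : ℝ)⁻¹ ^ m :=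
    pow_le_pow_of_le_one inv_prime_pos.le inv_prime_lt_one.le hmk
  exact ⟨hz ▸ hy ▸ h (by omega), hy ▸ hx ▸ h (by omega)⟩

lemma mem_iUnion_sphereTriple {w : ℤ_[p] × ℤ_[p] × ℤ_[p]} (hw : w ∈ normChain p)
    (hz : w.2.2 ≠ 0) : w ∈ ⋃ n, sphereTriple p n := by
  obtain ⟨x, y, z⟩ := w
  have hy : y ≠ 0 := norm_pos_iff.mp ((norm_pos_iff.mpr hz).trans_le hw.1)
  have hx : x ≠ 0 := norm_pos_iff.mp ((norm_pos_iff.mpr hy).trans_le hw.2)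
  have hxy := (norm_le_norm_iff_valuation_le hy hx).mp hw.2
  have hyz := (norm_le_norm_iff_valuation_le hz hy).mp hw.1
  refine mem_iUnion.mpr ⟨⟨x.valuation, y.valuation - x.valuation, z.valuation - y.valuation⟩,
    ?_, ?_, ?_⟩ <;>
  simp only [mem_sphere_zero_iff_norm, Nat.add_sub_cancel' hxy, Nat.add_sub_cancel' hyz,
    norm_eq_inv_pow_valuation, hx, hy, hz, ne_eq, not_false_eq_true]

lemma pairwise_disjoint_sphereTriple : Pairwise (Disjoint on sphereTriple p) := by
  rintro ⟨a, i, j⟩ ⟨a', i', j'⟩ hne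
  refine disjoint_left.mpr fun w ⟨hx, hy, hz⟩ ⟨hx', hy', hz'⟩ => hne ?_
  rw [mem_sphere_zero_iff_norm] at hx hy hz hx' hy' hz'
  have hinj := pow_right_injective₀ (inv_prime_pos (p := p)) inv_prime_lt_one.ne
  have ha : a = a' := hinj (hx.symm.trans hx')
  have hi : a + i = a' + i' := hinj (hy.symm.trans hy')
  have hj : a + i + j = a' + i' + j' := hinj (hz.symm.trans hz')
  simp only [Prod.mk.injEq]
  omega

section Measure

variable [MeasurableSpace ℤ_[p]] [BorelSpace ℤ_[p]] (μ : Measure ℤ_[p])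

lemma measure_closedBall_inv_pow [μ.IsAddLeftInvariant] (n : ℕ) :
    (p : ENNReal) ^ n * μ (closedBall 0 ((p : ℝ)⁻¹ ^ n)) = μ univ := by
  set H := (toZModPow n : ℤ_[p] →+* ZMod (p ^ n)).toAddMonoidHom.ker
  have hpn : p ^ n ≠ 0 := pow_ne_zero n (Fact.out : p.Prime).ne_zero
  have hindex : H.index = p ^ n := by
    have : NeZero (p ^ n) := ⟨hpn⟩
    rw [AddSubgroup.index_ker, AddMonoidHom.range_eq_top.mpr (ZMod.ringHom_surjective _)]
    simp
  have : H.FiniteIndex := ⟨hindex ▸ hpn⟩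
  rw [closedBall_inv_pow_eq_ker, ← H.index_mul_measure
    (closedBall_inv_pow_eq_ker (p := p) n ▸ measurableSet_closedBall), hindex]
  push_cast
  rfl

lemma measureReal_closedBall_inv_pow [μ.IsAddLeftInvariant] (n : ℕ) :
    μ.real (closedBall 0 ((p : ℝ)⁻¹ ^ n)) = μ.real univ * (p : ℝ)⁻¹ ^ n := by
  have h := congrArg ENNReal.toReal (measure_closedBall_inv_pow μ n)
  rw [ENNReal.toReal_mul, ENNReal.toReal_pow, ENNReal.toReal_natCast] at h
  have hp : (p : ℝ) ^ n ≠ 0 := pow_ne_zero n (Nat.cast_ne_zero.mpr (Fact.out : p.Prime).ne_zero)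
  rw [measureReal_def, measureReal_def, ← h, inv_pow]
  field_simp

lemma measureReal_sphere_inv_pow [IsFiniteMeasure μ] [μ.IsAddLeftInvariant] (n : ℕ) :
    μ.real (sphere 0 ((p : ℝ)⁻¹ ^ n)) = μ.real univ * ((1 - (p : ℝ)⁻¹) * (p : ℝ)⁻¹ ^ n) := by
  rw [← closedBall_sdiff_ball, ball_inv_pow_eq_closedBall,
    measureReal_sdiff (closedBall_subset_closedBall ?_) measurableSet_closedBall,
    measureReal_closedBall_inv_pow, measureReal_closedBall_inv_pow]
  · ring
  · exact pow_le_pow_of_le_one inv_prime_pos.le inv_prime_lt_one.le n.le_succ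

lemma measurableSet_sphereTriple (n : ℕ × ℕ × ℕ) : MeasurableSet (sphereTriple p n) :=
  isClosed_sphere.measurableSet.prod
    (isClosed_sphere.measurableSet.prod isClosed_sphere.measurableSet)

lemma measurableSet_normChain : MeasurableSet (normChain p) :=
  ((isClosed_le continuous_snd.snd.norm continuous_snd.fst.norm).inter
    (isClosed_le continuous_snd.fst.norm continuous_fst.norm)).measurableSet

lemma setIntegral_normChain_eq_tsum (ν : Measure (ℤ_[p] × ℤ_[p] × ℤ_[p]))
    {F : ℤ_[p] × ℤ_[p] × ℤ_[p] → ℝ} (hF : IntegrableOn F (normChain p) ν)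
    (hF₀ : ∀ w : ℤ_[p] × ℤ_[p] × ℤ_[p], w.2.2 = 0 → F w = 0) :
    ∫ w in normChain p, F w ∂ν = ∑' n, ∫ w in sphereTriple p n, F w ∂ν := by
  have hsub : (⋃ n, sphereTriple p n) ⊆ normChain p := iUnion_subset sphereTriple_subset_normChain
  rw [← integral_iUnion measurableSet_sphereTriple pairwise_disjoint_sphereTriple
    (hF.mono_set hsub)]
  refine setIntegral_eq_of_subset_of_forall_sdiff_eq_zero measurableSet_normChain hsub ?_
  exact fun w ⟨hw, hwU⟩ => hF₀ w (not_ne_iff.mp fun hz => hwU (mem_iUnion_sphereTriple hw hz))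

variable [IsProbabilityMeasure μ] [μ.IsAddLeftInvariant]

lemma setIntegral_sphereTriple (α β : ℝ) (n : ℕ × ℕ × ℕ) :
    ∫ w in sphereTriple p n, ‖w.1‖ ^ α * ‖w.2.2‖ ^ β ∂(μ.prod (μ.prod μ)) =
      (1 - (p : ℝ)⁻¹) ^ 3 * (((p : ℝ)⁻¹ ^ (α + β + 3)) ^ n.1 *
        (((p : ℝ)⁻¹ ^ (β + 2)) ^ n.2.1 * ((p : ℝ)⁻¹ ^ (β + 1)) ^ n.2.2)) := by
  obtain ⟨a, i, j⟩ := n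
  have hconst : EqOn (fun w : ℤ_[p] × ℤ_[p] × ℤ_[p] => ‖w.1‖ ^ α * ‖w.2.2‖ ^ β)
      (fun _ => ((p : ℝ)⁻¹ ^ a) ^ α * ((p : ℝ)⁻¹ ^ (a + i + j)) ^ β)
      (sphereTriple p (a, i, j)) := by
    rintro w ⟨hx, -, hz⟩
    rw [mem_sphere_zero_iff_norm] at hx hz
    simp only [hx, hz]
  rw [setIntegral_congr_fun (measurableSet_sphereTriple _) hconst, setIntegral_const,
    sphereTriple, measureReal_prod_prod, measureReal_prod_prod, measureReal_sphere_inv_pow,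
    measureReal_sphere_inv_pow, measureReal_sphere_inv_pow, probReal_univ, smul_eq_mul]
  have ht : 0 < (p : ℝ)⁻¹ := inv_prime_pos
  simp only [← Real.rpow_pow_comm ht.le, Real.rpow_add ht, Real.rpow_ofNat, Real.rpow_one]
  ring

lemma setIntegral_normChain_rpow {α β : ℝ} (hα : 0 ≤ α) (hβ : 0 < β) :
    ∫ w in normChain p, ‖w.1‖ ^ α * ‖w.2.2‖ ^ β ∂(μ.prod (μ.prod μ)) =
      (1 - (p : ℝ)⁻¹) ^ 3 * ((1 - (p : ℝ)⁻¹ ^ (α + β + 3))⁻¹ *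
        ((1 - (p : ℝ)⁻¹ ^ (β + 2))⁻¹ * (1 - (p : ℝ)⁻¹ ^ (β + 1))⁻¹)) := by
  have hcont : Continuous fun w : ℤ_[p] × ℤ_[p] × ℤ_[p] => ‖w.1‖ ^ α * ‖w.2.2‖ ^ β :=
    (continuous_fst.norm.rpow_const fun _ => Or.inr hα).mul
      (continuous_snd.snd.norm.rpow_const fun _ => Or.inr hβ.le)
  have hlt {γ : ℝ} (hγ : 0 < γ) : ‖(p : ℝ)⁻¹ ^ γ‖ < 1 := by
    rw [Real.norm_of_nonneg (by positivity)]
    exact inv_prime_rpow_lt_one hγ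
  rw [setIntegral_normChain_eq_tsum _ (hcont.integrable_of_hasCompactSupport
      (.of_compactSpace _)).integrableOn fun w hz => by simp [hz, Real.zero_rpow hβ.ne'],
    tsum_congr (setIntegral_sphereTriple μ α β), tsum_mul_left,
    tsum_geometric_prod_three (hlt (by linarith)) (hlt (by linarith)) (hlt (by linarith))]

end Measure

end PadicInt

theorem stmt4 (p : ℕ) [Fact p.Prime]
    [MeasurableSpace ℤ_[p]] [BorelSpace ℤ_[p]]
    (μ : Measure ℤ_[p]) [μ.IsAddHaarMeasure] (hμ : μ Set.univ = 1)
    (s₁ s₂ : ℝ) (hs₁ : 2 < s₁) (hs₂ : 2 < s₂)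
    (X Y : ℝ) (hX : X = (p : ℝ) ^ (-s₁)) (hY : Y = (p : ℝ) ^ (-s₂)) :
    ((1 - (p : ℝ)⁻¹) ^ 2)⁻¹ *
      ∫ w in {w : ℤ_[p] × ℤ_[p] × ℤ_[p] | ‖w.2.2‖ ≤ ‖w.2.1‖ ∧ ‖w.2.1‖ ≤ ‖w.1‖},
        ‖w.1‖ ^ (s₂ - 2) * ‖w.2.2‖ ^ (s₁ - 1) ∂(μ.prod (μ.prod μ)) =
      (1 - (p : ℝ)⁻¹) / ((1 - X) * (1 - (p : ℝ)⁻¹ * X) * (1 - X * Y)) := by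
  have : IsProbabilityMeasure μ := ⟨hμ⟩
  have ht : 0 < (p : ℝ)⁻¹ := PadicInt.inv_prime_pos
  have hrpow (s : ℝ) : (p : ℝ) ^ (-s) = (p : ℝ)⁻¹ ^ s := by
    rw [Real.inv_rpow (Nat.cast_nonneg p), Real.rpow_neg (Nat.cast_nonneg p)]
  have hX' : (p : ℝ)⁻¹ ^ s₁ = X := by rw [hX, hrpow]
  have hXY : (p : ℝ)⁻¹ ^ (s₁ + s₂) = X * Y := by rw [hX, hY, hrpow, hrpow, Real.rpow_add ht]
  have htX : (p : ℝ)⁻¹ ^ (1 + s₁) = (p : ℝ)⁻¹ * X := by rw [Real.rpow_add ht, Real.rpow_one, hX']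
  have key := PadicInt.setIntegral_normChain_rpow μ (α := s₂ - 2) (β := s₁ - 1)
    (by linarith) (by linarith)
  rw [show s₂ - 2 + (s₁ - 1) + 3 = s₁ + s₂ by ring, show s₁ - 1 + 2 = 1 + s₁ by ring,
    sub_add_cancel, hXY, htX, hX', PadicInt.normChain] at key
  have hne {γ : ℝ} (hγ : 0 < γ) : 1 - (p : ℝ)⁻¹ ^ γ ≠ 0 :=
    (sub_pos.mpr (PadicInt.inv_prime_rpow_lt_one hγ)).ne'
  have h₀ : 1 - (p : ℝ)⁻¹ ≠ 0 := (sub_pos.mpr PadicInt.inv_prime_lt_one).ne'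
  have h₁ : 1 - X ≠ 0 := hX' ▸ hne (by linarith)
  have h₂ : 1 - (p : ℝ)⁻¹ * X ≠ 0 := htX ▸ hne (by linarith)
  have h₃ : 1 - X * Y ≠ 0 := hXY ▸ hne (by linarith)
  rw [key]
  field_simp
end

section
/- Let p be a prime and s₁, s₂ real numbers with s₁ > 2 and s₂ > 2. Set X = p^{−s₁} and Y = p^{−s₂}. Then (1 − p⁻¹)⁻² times the integral over {(x,y,z) ∈ ℤ_p³ : ‖z‖ < ‖x‖ < ‖y‖} of ‖x‖^{s₁−2}·‖z‖^{s₁−1}·‖y‖^{s₂−s₁} with respect to μ³ equals (p − 1)·X³ / ((1 − X)(1 − pX²)(1 − XY)). -/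
/-!
Both the domain and the integrand depend only on the norms of `x, y, z`. Off the null set
`{0}`, `ℤ_[p]` is the disjoint union of the spheres `‖x‖ = p^{-n}`, and since the ball
`‖x‖ ≤ p^{-n}` is the kernel of `ℤ_[p] → ℤ/p^n`, a subgroup of index `p^n`, the sphere has
measure `(1 - p⁻¹) p^{-n}`. By Tonelli the integral becomes a sum over valuations `b < a < c`
of `y, x, z`; writing `a = b + j + 1`, `c = a + k + 1` turns it into a product of three
geometric series with ratios `XY`, `pX²` and `X`.
-/

open MeasureTheory Metric
open scoped ENNReal

theorem measurableSet_setOf_norm_lt_norm_lt {E : Type*} [NormedAddCommGroup E]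
    [MeasurableSpace E] [OpensMeasurableSpace E] :
    MeasurableSet {w : E × E × E | ‖w.2.2‖ < ‖w.1‖ ∧ ‖w.1‖ < ‖w.2.1‖} := by
  rw [Set.ofPred_and]
  exact (measurableSet_lt (by fun_prop) (by fun_prop)).inter
    (measurableSet_lt (by fun_prop) (by fun_prop))

theorem ENNReal.tsum_ofReal_geometric {r : ℝ} (h₀ : 0 ≤ r) (h₁ : r < 1) :
    ∑' n : ℕ, ENNReal.ofReal r ^ n = ENNReal.ofReal (1 - r)⁻¹ := by
  rw [ENNReal.tsum_geometric, ← ENNReal.ofReal_one, ← ENNReal.ofReal_sub _ h₀,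
    ENNReal.ofReal_inv_of_pos (by linarith)]

theorem ENNReal.tsum_ofReal_mul_geometric_three {C u v w : ℝ} (hC : 0 ≤ C)
    (hu₀ : 0 ≤ u) (hu₁ : u < 1) (hv₀ : 0 ≤ v) (hv₁ : v < 1) (hw₀ : 0 ≤ w) (hw₁ : w < 1) :
    ∑' (i : ℕ) (j : ℕ) (k : ℕ),
        ENNReal.ofReal C * ENNReal.ofReal u ^ i * ENNReal.ofReal v ^ j * ENNReal.ofReal w ^ k =
      ENNReal.ofReal (C * (1 - u)⁻¹ * (1 - v)⁻¹ * (1 - w)⁻¹) := by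
  have : 0 < 1 - u := by linarith
  have : 0 < 1 - v := by linarith
  simp only [ENNReal.tsum_mul_left, ENNReal.tsum_mul_right]
  rw [ENNReal.tsum_ofReal_geometric hu₀ hu₁, ENNReal.tsum_ofReal_geometric hv₀ hv₁,
    ENNReal.tsum_ofReal_geometric hw₀ hw₁]
  simp (disch := positivity) only [← ENNReal.ofReal_mul]

theorem ENNReal.tsum_ite_lt_lt (h : ℕ → ℕ → ℕ → ℝ≥0∞) :
    ∑' (a : ℕ) (b : ℕ) (c : ℕ), (if b < a ∧ a < c then h a b c else 0) =
      ∑' (i : ℕ) (j : ℕ) (k : ℕ), h (i + j + 1) i (i + j + k + 2) := by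
  set f : ℕ × ℕ × ℕ → ℝ≥0∞ := fun q ↦ if q.2.1 < q.1 ∧ q.1 < q.2.2 then h q.1 q.2.1 q.2.2 else 0
  set g : ℕ × ℕ × ℕ → ℕ × ℕ × ℕ := fun v ↦ (v.1 + v.2.1 + 1, v.1, v.1 + v.2.1 + v.2.2 + 2)
  have hg : Function.Injective g := by
    rintro ⟨i, j, k⟩ ⟨i', j', k'⟩ hijk
    simp only [g, Prod.mk.injEq] at hijk ⊢
    omega
  have hsupp : Function.support f ⊆ Set.range g := by
    rintro ⟨a, b, c⟩ hq
    have hlt : b < a ∧ a < c := by by_contra hn; exact hq (if_neg hn)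
    exact ⟨(b, a - b - 1, c - a - 1), by simp only [g, Prod.mk.injEq, true_and]; omega⟩
  have hfg (v : ℕ × ℕ × ℕ) : f (g v) = h (v.1 + v.2.1 + 1) v.1 (v.1 + v.2.1 + v.2.2 + 2) :=
    if_pos (by simp only [g]; omega)
  calc ∑' (a : ℕ) (b : ℕ) (c : ℕ), (if b < a ∧ a < c then h a b c else 0)
      = ∑' q, f q := by simp only [f, ENNReal.tsum_prod']
    _ = ∑' v, f (g v) := (hg.tsum_eq hsupp).symm
    _ = _ := by simp only [hfg, ENNReal.tsum_prod']

theorem zpow_neg_mul_rpow_reindex {q : ℝ} (hq : 0 < q) (s₁ s₂ : ℝ) (i j k : ℕ) :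
    q ^ (-((i + j + 1 : ℕ) : ℤ)) * q ^ (-(i : ℤ)) * q ^ (-((i + j + k + 2 : ℕ) : ℤ)) *
      ((q ^ (-((i + j + 1 : ℕ) : ℤ))) ^ (s₁ - 2) * (q ^ (-((i + j + k + 2 : ℕ) : ℤ))) ^ (s₁ - 1) *
        (q ^ (-(i : ℤ))) ^ (s₂ - s₁)) =
      q * (q ^ (-s₁)) ^ 3 * (q ^ (-s₁) * q ^ (-s₂)) ^ i * (q * (q ^ (-s₁)) ^ 2) ^ j *
        (q ^ (-s₁)) ^ k := by
  simp only [← Real.rpow_intCast, ← Real.rpow_natCast, ← Real.rpow_mul hq.le]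
  conv_rhs => rw [← Real.rpow_one q]
  simp only [← Real.rpow_mul hq.le, ← Real.rpow_add hq]
  congr 1
  push_cast
  ring

namespace PadicInt

variable {p : ℕ} [Fact p.Prime]

theorem strictAnti_zpow_neg : StrictAnti fun n : ℕ ↦ (p : ℝ) ^ (-(n : ℤ)) := fun _ _ hmn ↦
  zpow_lt_zpow_right₀ (mod_cast (Fact.out : p.Prime).one_lt) (by omega)

theorem closedBall_zero_eq_ker_toZModPow (n : ℕ) :
    closedBall (0 : ℤ_[p]) ((p : ℝ) ^ (-(n : ℤ))) =
      (RingHom.ker (toZModPow n : ℤ_[p] →+* ZMod (p ^ n)) : Set ℤ_[p]) := by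
  ext x
  rw [mem_closedBall_zero_iff, norm_le_pow_iff_mem_span_pow, ← ker_toZModPow]
  rfl

theorem ball_zero_eq_closedBall_succ (n : ℕ) :
    ball (0 : ℤ_[p]) ((p : ℝ) ^ (-(n : ℤ))) = closedBall 0 ((p : ℝ) ^ (-((n + 1 : ℕ) : ℤ))) := by
  ext x
  rw [mem_ball_zero_iff, mem_closedBall_zero_iff, norm_lt_pow_iff_norm_le_pow_sub_one]
  push_cast
  ring_nf

theorem index_ker_toZModPow (n : ℕ) :
    (RingHom.ker (toZModPow n : ℤ_[p] →+* ZMod (p ^ n))).toAddSubgroup.index = p ^ n := by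
  have hsurj := ZMod.ringHom_surjective (toZModPow n : ℤ_[p] →+* ZMod (p ^ n))
  have : NeZero (p ^ n) := ⟨pow_ne_zero n (Fact.out : p.Prime).ne_zero⟩
  change (toZModPow n : ℤ_[p] →+* ZMod (p ^ n)).toAddMonoidHom.ker.index = p ^ n
  rw [AddSubgroup.index_ker, AddMonoidHom.range_eq_top.mpr hsurj, AddSubgroup.card_top,
    Nat.card_zmod]

variable [MeasurableSpace ℤ_[p]] [BorelSpace ℤ_[p]] {μ : Measure ℤ_[p]} [μ.IsAddLeftInvariant]

theorem measure_closedBall_zero (hμ : μ Set.univ = 1) (n : ℕ) :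
    μ (closedBall 0 ((p : ℝ) ^ (-(n : ℤ)))) = ENNReal.ofReal ((p : ℝ) ^ (-(n : ℤ))) := by
  set H := (RingHom.ker (toZModPow n : ℤ_[p] →+* ZMod (p ^ n))).toAddSubgroup
  have hH : (H : Set ℤ_[p]) = closedBall 0 ((p : ℝ) ^ (-(n : ℤ))) :=
    (closedBall_zero_eq_ker_toZModPow n).symm
  have : H.FiniteIndex :=
    ⟨by rw [index_ker_toZModPow]; exact pow_ne_zero n (Fact.out : p.Prime).ne_zero⟩
  have key := H.index_mul_measure (hH ▸ measurableSet_closedBall) μ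
  rw [index_ker_toZModPow, hμ, hH, mul_comm] at key
  rw [ENNReal.eq_inv_of_mul_eq_one_left key, zpow_neg, zpow_natCast,
    ENNReal.ofReal_inv_of_pos (by have := (Fact.out : p.Prime).pos; positivity)]
  norm_cast

theorem measure_sphere_zero (hμ : μ Set.univ = 1) (n : ℕ) :
    μ (sphere 0 ((p : ℝ) ^ (-(n : ℤ)))) =
      ENNReal.ofReal ((1 - (p : ℝ)⁻¹) * (p : ℝ) ^ (-(n : ℤ))) := by
  have : IsFiniteMeasure μ := ⟨by simp [hμ]⟩
  have hp : (0 : ℝ) < p := mod_cast (Fact.out : p.Prime).pos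
  rw [← closedBall_sdiff_ball, measure_sdiff ball_subset_closedBall
    measurableSet_ball.nullMeasurableSet (measure_ne_top μ _), ball_zero_eq_closedBall_succ,
    measure_closedBall_zero hμ, measure_closedBall_zero hμ,
    ← ENNReal.ofReal_sub _ (by positivity)]
  congr 1
  push_cast
  rw [neg_add, zpow_add₀ hp.ne', zpow_neg_one]
  ring

theorem measure_singleton_zero (hμ : μ Set.univ = 1) : μ {0} = 0 := by
  have hle (n : ℕ) : μ {0} ≤ ENNReal.ofReal ((p : ℝ)⁻¹ ^ n) := by
    rw [inv_pow, ← zpow_natCast, ← zpow_neg, ← measure_closedBall_zero hμ]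
    exact measure_mono (by simp)
  have hp : (1 : ℝ) < p := mod_cast (Fact.out : p.Prime).one_lt
  have hlim := ENNReal.tendsto_ofReal (tendsto_pow_atTop_nhds_zero_of_lt_one (by positivity)
    (inv_lt_one_of_one_lt₀ hp))
  rw [ENNReal.ofReal_zero] at hlim
  exact le_antisymm (ge_of_tendsto' hlim hle) bot_le

theorem lintegral_comp_norm (hμ : μ Set.univ = 1) (F : ℝ → ℝ≥0∞) :
    ∫⁻ x, F ‖x‖ ∂μ = ∑' n : ℕ,
      ENNReal.ofReal ((1 - (p : ℝ)⁻¹) * (p : ℝ) ^ (-(n : ℤ))) * F ((p : ℝ) ^ (-(n : ℤ))) := by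
  set S : ℕ → Set ℤ_[p] := fun n ↦ sphere 0 ((p : ℝ) ^ (-(n : ℤ)))
  have hcover : (⋃ n, S n) =ᵐ[μ] Set.univ := by
    refine ae_eq_univ.2 (measure_mono_null (fun x hx ↦ ?_) (measure_singleton_zero hμ))
    by_contra hx0
    exact hx (Set.mem_iUnion.2 ⟨x.valuation, by simp [S, norm_eq_zpow_neg_valuation hx0]⟩)
  have hdisj : Pairwise (Function.onFun Disjoint S) := fun m n hmn ↦
    Set.disjoint_left.2 fun x hm hn ↦ hmn (strictAnti_zpow_neg.injective
      ((mem_sphere_zero_iff_norm.1 hm).symm.trans (mem_sphere_zero_iff_norm.1 hn)))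
  rw [← setLIntegral_univ, ← setLIntegral_congr hcover,
    lintegral_iUnion (fun n ↦ isClosed_sphere.measurableSet) hdisj]
  refine tsum_congr fun n ↦ ?_
  rw [setLIntegral_congr_fun isClosed_sphere.measurableSet (fun x hx ↦ by
      rw [mem_sphere_zero_iff_norm.1 hx]), setLIntegral_const, measure_sphere_zero hμ, mul_comm]

theorem lintegral_prod_prod_comp_norm (hμ : μ Set.univ = 1) (G : ℝ → ℝ → ℝ → ℝ≥0∞)
    (hG : Measurable fun w : ℤ_[p] × ℤ_[p] × ℤ_[p] ↦ G ‖w.1‖ ‖w.2.1‖ ‖w.2.2‖) :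
    ∫⁻ w, G ‖w.1‖ ‖w.2.1‖ ‖w.2.2‖ ∂(μ.prod (μ.prod μ)) =
      ∑' (a : ℕ) (b : ℕ) (c : ℕ),
        ENNReal.ofReal ((1 - (p : ℝ)⁻¹) * (p : ℝ) ^ (-(a : ℤ))) *
        ENNReal.ofReal ((1 - (p : ℝ)⁻¹) * (p : ℝ) ^ (-(b : ℤ))) *
        ENNReal.ofReal ((1 - (p : ℝ)⁻¹) * (p : ℝ) ^ (-(c : ℤ))) *
        G ((p : ℝ) ^ (-(a : ℤ))) ((p : ℝ) ^ (-(b : ℤ))) ((p : ℝ) ^ (-(c : ℤ))) := by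
  have : IsFiniteMeasure μ := ⟨by simp [hμ]⟩
  set w : ℕ → ℝ≥0∞ := fun n ↦ ENNReal.ofReal ((1 - (p : ℝ)⁻¹) * (p : ℝ) ^ (-(n : ℤ)))
  set r : ℕ → ℝ := fun n ↦ (p : ℝ) ^ (-(n : ℤ))
  calc ∫⁻ w, G ‖w.1‖ ‖w.2.1‖ ‖w.2.2‖ ∂(μ.prod (μ.prod μ))
      = ∫⁻ x, ∫⁻ y, ∫⁻ z, G ‖x‖ ‖y‖ ‖z‖ ∂μ ∂μ ∂μ := by
        rw [lintegral_prod _ hG.aemeasurable]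
        exact lintegral_congr fun x ↦
          lintegral_prod _ (hG.comp measurable_prodMk_left).aemeasurable
    _ = ∫⁻ x, ∫⁻ y, ∑' c, w c * G ‖x‖ ‖y‖ (r c) ∂μ ∂μ :=
        lintegral_congr fun x ↦ lintegral_congr fun y ↦ lintegral_comp_norm hμ _
    _ = ∫⁻ x, ∑' b, w b * ∑' c, w c * G ‖x‖ (r b) (r c) ∂μ :=
        lintegral_congr fun x ↦ lintegral_comp_norm hμ (fun v ↦ ∑' c, w c * G ‖x‖ v (r c))
    _ = ∑' a, w a * ∑' b, w b * ∑' c, w c * G (r a) (r b) (r c) :=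
        lintegral_comp_norm hμ (fun u ↦ ∑' b, w b * ∑' c, w c * G u (r b) (r c))
    _ = _ := by simp_rw [← ENNReal.tsum_mul_left, mul_assoc]; rfl

theorem lintegral_indicator_norm_rpow_eq_tsum (hμ : μ Set.univ = 1) {s₁ s₂ X Y : ℝ}
    (hX : X = (p : ℝ) ^ (-s₁)) (hY : Y = (p : ℝ) ^ (-s₂)) :
    ∫⁻ w, ENNReal.ofReal ({w : ℤ_[p] × ℤ_[p] × ℤ_[p] | ‖w.2.2‖ < ‖w.1‖ ∧ ‖w.1‖ < ‖w.2.1‖}.indicator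
        (fun w ↦ ‖w.1‖ ^ (s₁ - 2) * ‖w.2.2‖ ^ (s₁ - 1) * ‖w.2.1‖ ^ (s₂ - s₁)) w)
        ∂(μ.prod (μ.prod μ)) =
      ∑' (i : ℕ) (j : ℕ) (k : ℕ), ENNReal.ofReal ((1 - (p : ℝ)⁻¹) ^ 3 * (p * X ^ 3)) *
        ENNReal.ofReal (X * Y) ^ i * ENNReal.ofReal (p * X ^ 2) ^ j * ENNReal.ofReal X ^ k := by
  have hq : (0 : ℝ) < p := mod_cast (Fact.out : p.Prime).pos
  have hκ : 0 < 1 - (p : ℝ)⁻¹ :=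
    sub_pos.2 (inv_lt_one_of_one_lt₀ (mod_cast (Fact.out : p.Prime).one_lt))
  have hX₀ : 0 < X := hX ▸ Real.rpow_pos_of_pos hq _
  have hY₀ : 0 < Y := hY ▸ Real.rpow_pos_of_pos hq _
  set G : ℝ → ℝ → ℝ → ℝ≥0∞ := fun u v r ↦
    ENNReal.ofReal (if r < u ∧ u < v then u ^ (s₁ - 2) * r ^ (s₁ - 1) * v ^ (s₂ - s₁) else 0)
  have hGeq (w : ℤ_[p] × ℤ_[p] × ℤ_[p]) : ENNReal.ofReal
      ({w : ℤ_[p] × ℤ_[p] × ℤ_[p] | ‖w.2.2‖ < ‖w.1‖ ∧ ‖w.1‖ < ‖w.2.1‖}.indicator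
        (fun w ↦ ‖w.1‖ ^ (s₁ - 2) * ‖w.2.2‖ ^ (s₁ - 1) * ‖w.2.1‖ ^ (s₂ - s₁)) w) =
      G ‖w.1‖ ‖w.2.1‖ ‖w.2.2‖ := by
    simp only [Set.indicator_apply, G, Set.mem_ofPred_eq]
  have hG : Measurable fun w : ℤ_[p] × ℤ_[p] × ℤ_[p] ↦ G ‖w.1‖ ‖w.2.1‖ ‖w.2.2‖ := by
    simp only [← hGeq]
    exact (Measurable.indicator (by fun_prop) measurableSet_setOf_norm_lt_norm_lt).ennreal_ofReal
  set h : ℕ → ℕ → ℕ → ℝ≥0∞ := fun a b c ↦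
    ENNReal.ofReal ((1 - (p : ℝ)⁻¹) * (p : ℝ) ^ (-(a : ℤ))) *
    ENNReal.ofReal ((1 - (p : ℝ)⁻¹) * (p : ℝ) ^ (-(b : ℤ))) *
    ENNReal.ofReal ((1 - (p : ℝ)⁻¹) * (p : ℝ) ^ (-(c : ℤ))) *
    ENNReal.ofReal (((p : ℝ) ^ (-(a : ℤ))) ^ (s₁ - 2) * ((p : ℝ) ^ (-(c : ℤ))) ^ (s₁ - 1) *
      ((p : ℝ) ^ (-(b : ℤ))) ^ (s₂ - s₁))
  rw [lintegral_congr hGeq, lintegral_prod_prod_comp_norm hμ G hG]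
  calc _ = ∑' (a : ℕ) (b : ℕ) (c : ℕ), if b < a ∧ a < c then h a b c else 0 := by
        refine tsum_congr fun a ↦ tsum_congr fun b ↦ tsum_congr fun c ↦ ?_
        simp only [G]
        by_cases hlt : b < a ∧ a < c
        · rw [if_pos hlt, if_pos ⟨strictAnti_zpow_neg.lt_iff_gt.2 hlt.2,
            strictAnti_zpow_neg.lt_iff_gt.2 hlt.1⟩]
        · rw [if_neg hlt, if_neg fun h' ↦ hlt ⟨strictAnti_zpow_neg.lt_iff_gt.1 h'.2,
            strictAnti_zpow_neg.lt_iff_gt.1 h'.1⟩, ENNReal.ofReal_zero, mul_zero]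
    _ = ∑' (i : ℕ) (j : ℕ) (k : ℕ), h (i + j + 1) i (i + j + k + 2) := ENNReal.tsum_ite_lt_lt h
    _ = _ := by
        refine tsum_congr fun i ↦ tsum_congr fun j ↦ tsum_congr fun k ↦ ?_
        simp (disch := positivity) only [h, ← ENNReal.ofReal_mul, ← ENNReal.ofReal_pow]
        congr 1
        rw [hX, hY]
        linear_combination (1 - (p : ℝ)⁻¹) ^ 3 * zpow_neg_mul_rpow_reindex hq s₁ s₂ i j k

end PadicInt

theorem stmt7 (p : ℕ) [Fact p.Prime]
    [MeasurableSpace ℤ_[p]] [BorelSpace ℤ_[p]]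
    (μ : Measure ℤ_[p]) [μ.IsAddHaarMeasure] (hμ : μ Set.univ = 1)
    (s₁ s₂ : ℝ) (hs₁ : 2 < s₁) (hs₂ : 2 < s₂)
    (X Y : ℝ) (hX : X = (p : ℝ) ^ (-s₁)) (hY : Y = (p : ℝ) ^ (-s₂)) :
    ((1 - (p : ℝ)⁻¹) ^ 2)⁻¹ *
      ∫ w in {w : ℤ_[p] × ℤ_[p] × ℤ_[p] | ‖w.2.2‖ < ‖w.1‖ ∧ ‖w.1‖ < ‖w.2.1‖},
        ‖w.1‖ ^ (s₁ - 2) * ‖w.2.2‖ ^ (s₁ - 1) * ‖w.2.1‖ ^ (s₂ - s₁) ∂(μ.prod (μ.prod μ)) =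
      ((p : ℝ) - 1) * X ^ 3 / ((1 - X) * (1 - (p : ℝ) * X ^ 2) * (1 - X * Y)) := by
  have hp : (1 : ℝ) < p := mod_cast (Fact.out : p.Prime).one_lt
  have hX₀ : 0 < X := hX ▸ by positivity
  have hY₀ : 0 < Y := hY ▸ by positivity
  have hX₁ : X < 1 := hX ▸ Real.rpow_lt_one_of_one_lt_of_neg hp (by linarith)
  have hY₁ : Y < 1 := hY ▸ Real.rpow_lt_one_of_one_lt_of_neg hp (by linarith)
  have hXp : X * p < 1 := by
    rw [hX, ← Real.rpow_add_one (by positivity)]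
    exact Real.rpow_lt_one_of_one_lt_of_neg hp (by linarith)
  have hpX : p * X ^ 2 < 1 := by nlinarith
  have hXY : X * Y < 1 := by nlinarith
  have hκ : 0 < 1 - (p : ℝ)⁻¹ := sub_pos.2 (inv_lt_one_of_one_lt₀ hp)
  have : 0 < 1 - X := by linarith
  have : 0 < 1 - p * X ^ 2 := by linarith
  have : 0 < 1 - X * Y := by linarith
  rw [← integral_indicator measurableSet_setOf_norm_lt_norm_lt,
    integral_eq_lintegral_of_nonneg_ae
      (.of_forall fun w ↦ Set.indicator_nonneg (fun w _ ↦ by positivity) w)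
      (Measurable.indicator (by fun_prop)
        measurableSet_setOf_norm_lt_norm_lt).aestronglyMeasurable,
    PadicInt.lintegral_indicator_norm_rpow_eq_tsum hμ hX hY,
    ENNReal.tsum_ofReal_mul_geometric_three (by positivity) (by positivity) hXY (by positivity) hpX
      hX₀.le hX₁,
    ENNReal.toReal_ofReal (by positivity)]
  field_simp
end

section
/- Let p be a prime and s₁, s₂ real numbers with s₁ > 2 and s₂ > 2. Set X = p^{−s₁} and Y = p^{−s₂}. Then (1 − p⁻¹)⁻² times the integral over {(x,y,z) ∈ ℤ_p³ : ‖z‖² ≤ ‖x‖ and ‖y‖ ≤ ‖x‖ < ‖z‖} of ‖x‖^{s₁−2}·‖z‖^{s₂−1} with respect to μ³ equals X²Y / ((1 − X²Y)(1 − XY)). -/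
/-!
Split the region by the valuations `a = v(x)` and `c = v(z)`: it is the disjoint union, over
`c < a ≤ 2c`, of the cells `{v(x) = a, v(y) ≥ a, v(z) = c}`, on each of which the integrand is
constant. The ball `{v ≥ n}` is an additive subgroup of index `pⁿ`, so it has Haar measure `p⁻ⁿ`
and the sphere `{v = n}` has measure `(1 - p⁻¹) p⁻ⁿ`; hence the cell contributes
`(1 - p⁻¹)² X^a Y^c`. The substitution `(a, c) = (2j + d + 2, j + d + 1)` turns the sum into
`X²Y` times the product of the geometric series in `X²Y` and `XY`.
-/

open MeasureTheory Metric ENNReal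

variable {p : ℕ} [Fact p.Prime]

lemma zpow_neg_natCast_lt_zpow_neg_natCast_iff {b : ℝ} (hb : 1 < b) {m n : ℕ} :
    b ^ (-m : ℤ) < b ^ (-n : ℤ) ↔ n < m := by
  rw [zpow_lt_zpow_iff_right₀ hb]
  omega

lemma sq_zpow_neg_natCast_le_zpow_neg_natCast_iff {b : ℝ} (hb : 1 < b) {m n : ℕ} :
    (b ^ (-n : ℤ)) ^ 2 ≤ b ^ (-m : ℤ) ↔ m ≤ 2 * n := by
  rw [← zpow_natCast, ← zpow_mul, zpow_le_zpow_iff_right₀ hb]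
  omega

lemma zpow_neg_natCast_rpow {b : ℝ} (hb : 0 < b) (n : ℕ) (t : ℝ) :
    (b ^ (-n : ℤ)) ^ t = (b ^ (-t)) ^ n := by
  rw [← Real.rpow_intCast, ← Real.rpow_natCast, ← Real.rpow_mul hb.le, ← Real.rpow_mul hb.le]
  push_cast
  ring_nf

lemma hasSum_pow_mul_pow {K : Type*} [NormedField K] [CompleteSpace K] {r s : K}
    (hr : ‖r‖ < 1) (hs : ‖s‖ < 1) :
    HasSum (fun q : ℕ × ℕ => r ^ q.1 * s ^ q.2) ((1 - r)⁻¹ * (1 - s)⁻¹) :=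
  (hasSum_geometric_of_norm_lt_one hr).mul (hasSum_geometric_of_norm_lt_one hs)
    (summable_mul_of_summable_norm (by simpa using summable_geometric_of_lt_one (norm_nonneg r) hr)
      (by simpa using summable_geometric_of_lt_one (norm_nonneg s) hs))

namespace PadicInt

lemma index_span_pow (n : ℕ) :
    (Ideal.span {(p : ℤ_[p]) ^ n}).toAddSubgroup.index = p ^ n := by
  rw [AddSubgroup.index_eq_card, ← ker_toZModPow]
  exact (Nat.card_congr (RingHom.quotientKerEquivOfSurjective
    (ZMod.ringHom_surjective (toZModPow n))).toEquiv).trans (Nat.card_zmod _)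

lemma closedBall_pow_eq_span (n : ℕ) :
    closedBall (0 : ℤ_[p]) ((p : ℝ) ^ (-n : ℤ)) =
      (Ideal.span {(p : ℤ_[p]) ^ n} : Set ℤ_[p]) := by
  ext x
  exact mem_closedBall_zero_iff.trans (norm_le_pow_iff_mem_span_pow x n)

lemma closedBall_pow_succ_eq_ball (n : ℕ) :
    closedBall (0 : ℤ_[p]) ((p : ℝ) ^ (-(n + 1 : ℕ) : ℤ)) =
      ball 0 ((p : ℝ) ^ (-n : ℤ)) := by
  ext x
  rw [mem_closedBall_zero_iff, mem_ball_zero_iff, norm_le_pow_iff_norm_lt_pow_add_one]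
  push_cast
  ring_nf

lemma exists_norm_eq_zpow_neg {x : ℤ_[p]} (hx : x ≠ 0) :
    ∃ n : ℕ, ‖x‖ = (p : ℝ) ^ (-n : ℤ) :=
  ⟨x.valuation, norm_eq_zpow_neg_valuation hx⟩

section Haar

variable [MeasurableSpace ℤ_[p]] [BorelSpace ℤ_[p]] {μ : Measure ℤ_[p]} [μ.IsAddHaarMeasure]

lemma addHaar_closedBall_pow (hμ : μ Set.univ = 1) (n : ℕ) :
    μ.real (closedBall (0 : ℤ_[p]) ((p : ℝ) ^ (-n : ℤ))) = (p : ℝ) ^ (-n : ℤ) := by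
  have hindex := index_span_pow (p := p) n
  have : (Ideal.span {(p : ℤ_[p]) ^ n}).toAddSubgroup.FiniteIndex :=
    ⟨by rw [hindex]; exact pow_ne_zero _ (Fact.out : p.Prime).ne_zero⟩
  have key := AddSubgroup.index_mul_measure (Ideal.span {(p : ℤ_[p]) ^ n}).toAddSubgroup
    (by rw [Submodule.coe_toAddSubgroup, ← closedBall_pow_eq_span]
        exact measurableSet_closedBall) μ
  rw [hindex, Submodule.coe_toAddSubgroup, ← closedBall_pow_eq_span, hμ] at key
  have hball : μ (closedBall 0 ((p : ℝ) ^ (-n : ℤ))) = ((p : ℝ≥0∞) ^ n)⁻¹ :=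
    ENNReal.eq_inv_of_mul_eq_one_left (by rw [mul_comm]; exact_mod_cast key)
  rw [measureReal_def, hball, zpow_neg, zpow_natCast]
  simp

lemma addHaar_sphere_pow (hμ : μ Set.univ = 1) (n : ℕ) :
    μ.real (sphere (0 : ℤ_[p]) ((p : ℝ) ^ (-n : ℤ))) =
      (1 - (p : ℝ)⁻¹) * (p : ℝ) ^ (-n : ℤ) := by
  have hp : (p : ℝ) ≠ 0 := by exact_mod_cast (Fact.out : p.Prime).ne_zero
  rw [← closedBall_sdiff_ball, ← closedBall_pow_succ_eq_ball,
    measureReal_sdiff (by rw [closedBall_pow_succ_eq_ball]; exact ball_subset_closedBall)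
      measurableSet_closedBall,
    addHaar_closedBall_pow hμ, addHaar_closedBall_pow hμ, Nat.cast_succ, neg_add, zpow_add₀ hp,
    zpow_neg_one]
  ring

end Haar

def cell (q : ℕ × ℕ) : Set (ℤ_[p] × ℤ_[p] × ℤ_[p]) :=
  sphere 0 ((p : ℝ) ^ (-q.1 : ℤ)) ×ˢ closedBall 0 ((p : ℝ) ^ (-q.1 : ℤ)) ×ˢ
    sphere 0 ((p : ℝ) ^ (-q.2 : ℤ))

lemma measurableSet_cell [MeasurableSpace ℤ_[p]] [BorelSpace ℤ_[p]] (q : ℕ × ℕ) :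
    MeasurableSet (cell (p := p) q) :=
  isClosed_sphere.measurableSet.prod
    (measurableSet_closedBall.prod isClosed_sphere.measurableSet)

lemma pairwise_disjoint_cell : Pairwise (Function.onFun Disjoint (cell (p := p))) := by
  have hinj := zpow_right_injective₀ (G₀ := ℝ) (a := p)
    (by exact_mod_cast (Fact.out : p.Prime).pos) (by exact_mod_cast (Fact.out : p.Prime).ne_one)
  rintro ⟨a, c⟩ ⟨a', c'⟩ hne
  refine Set.disjoint_left.2 ?_
  rintro ⟨x, y, z⟩ ⟨hx, -, hz⟩ ⟨hx', -, hz'⟩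
  refine hne ?_
  simp only [mem_sphere_zero_iff_norm] at hx hz hx' hz'
  have ha := hinj (hx.symm.trans hx')
  have hc := hinj (hz.symm.trans hz')
  simp only [neg_inj, Nat.cast_inj] at ha hc
  rw [ha, hc]

lemma mem_region_iff_exists_mem_cell {w : ℤ_[p] × ℤ_[p] × ℤ_[p]} :
    (‖w.2.2‖ ^ 2 ≤ ‖w.1‖ ∧ ‖w.2.1‖ ≤ ‖w.1‖ ∧ ‖w.1‖ < ‖w.2.2‖) ↔
      ∃ q : ℕ × ℕ, q.2 < q.1 ∧ q.1 ≤ 2 * q.2 ∧ w ∈ cell q := by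
  have hp : (1 : ℝ) < p := by exact_mod_cast (Fact.out : p.Prime).one_lt
  obtain ⟨x, y, z⟩ := w
  simp only [cell, Set.mem_prod, mem_sphere_zero_iff_norm, mem_closedBall_zero_iff]
  constructor
  · rintro ⟨hzx, hyx, hxz⟩
    have hz : z ≠ 0 := by
      rintro rfl
      exact (norm_nonneg x).not_gt (by simpa using hxz)
    have hx : x ≠ 0 := by
      rintro rfl
      exact (norm_ne_zero_iff.2 hz) (by simpa using hzx)
    obtain ⟨a, ha⟩ := exists_norm_eq_zpow_neg hx
    obtain ⟨c, hc⟩ := exists_norm_eq_zpow_neg hz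
    rw [ha, hc] at hzx hxz
    rw [ha] at hyx
    exact ⟨(a, c), (zpow_neg_natCast_lt_zpow_neg_natCast_iff hp).1 hxz,
      (sq_zpow_neg_natCast_le_zpow_neg_natCast_iff hp).1 hzx, ha, hyx, hc⟩
  · rintro ⟨⟨a, c⟩, hca, hac, hx, hy, hz⟩
    rw [hx, hz]
    exact ⟨(sq_zpow_neg_natCast_le_zpow_neg_natCast_iff hp).2 hac, hy,
      (zpow_neg_natCast_lt_zpow_neg_natCast_iff hp).2 hca⟩

def cellIndex (q : ℕ × ℕ) : ℕ × ℕ := (2 * q.1 + q.2 + 2, q.1 + q.2 + 1)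

lemma cellIndex_injective : Function.Injective cellIndex := by
  rintro ⟨j, d⟩ ⟨j', d'⟩ h
  simp only [cellIndex, Prod.mk.injEq] at h
  ext <;> omega

lemma exists_cellIndex_eq_iff {a c : ℕ} :
    (∃ q, cellIndex q = (a, c)) ↔ c < a ∧ a ≤ 2 * c := by
  constructor
  · rintro ⟨⟨j, d⟩, h⟩
    simp only [cellIndex, Prod.mk.injEq] at h
    omega
  · rintro ⟨hca, hac⟩
    exact ⟨(a - c - 1, 2 * c - a), by simp only [cellIndex, Prod.mk.injEq]; omega⟩

lemma region_eq_iUnion_cell :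
    {w : ℤ_[p] × ℤ_[p] × ℤ_[p] | ‖w.2.2‖ ^ 2 ≤ ‖w.1‖ ∧ ‖w.2.1‖ ≤ ‖w.1‖ ∧ ‖w.1‖ < ‖w.2.2‖} =
      ⋃ q, cell (cellIndex q) := by
  ext w
  simp only [Set.mem_ofPred_eq, mem_region_iff_exists_mem_cell, Set.mem_iUnion]
  constructor
  · rintro ⟨⟨a, c⟩, hca, hac, hw⟩
    obtain ⟨q, hq⟩ := exists_cellIndex_eq_iff.2 ⟨hca, hac⟩
    exact ⟨q, hq ▸ hw⟩
  · rintro ⟨q, hw⟩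
    exact ⟨cellIndex q, exists_cellIndex_eq_iff.1 ⟨q, rfl⟩ |>.1,
      exists_cellIndex_eq_iff.1 ⟨q, rfl⟩ |>.2, hw⟩

lemma hasSum_pow_cellIndex {X Y : ℝ} (hX₀ : 0 ≤ X) (hX₁ : X < 1) (hY₀ : 0 ≤ Y) (hY₁ : Y < 1) :
    HasSum (fun q => X ^ (cellIndex q).1 * Y ^ (cellIndex q).2)
      (X ^ 2 * Y / ((1 - X ^ 2 * Y) * (1 - X * Y))) := by
  have hgeom := hasSum_pow_mul_pow (r := X ^ 2 * Y) (s := X * Y)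
    (by rw [Real.norm_of_nonneg (by positivity)]; nlinarith [mul_nonneg hX₀ hY₀])
    (by rw [Real.norm_of_nonneg (by positivity)]; nlinarith [mul_nonneg hX₀ hY₀])
  rw [div_eq_mul_inv, _root_.mul_inv]
  refine (hgeom.mul_left (X ^ 2 * Y)).congr_fun fun q => ?_
  simp only [cellIndex]
  ring

lemma integral_cell [MeasurableSpace ℤ_[p]] [BorelSpace ℤ_[p]] {μ : Measure ℤ_[p]}
    [μ.IsAddHaarMeasure] (hμ : μ Set.univ = 1) (s₁ s₂ : ℝ) (q : ℕ × ℕ) :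
    ∫ w in cell q, ‖w.1‖ ^ (s₁ - 2) * ‖w.2.2‖ ^ (s₂ - 1) ∂(μ.prod (μ.prod μ)) =
      (1 - (p : ℝ)⁻¹) ^ 2 * (((p : ℝ) ^ (-s₁)) ^ q.1 * ((p : ℝ) ^ (-s₂)) ^ q.2) := by
  have hp : (0 : ℝ) < p := by exact_mod_cast (Fact.out : p.Prime).pos
  rw [setIntegral_congr_fun (measurableSet_cell q)
      (g := fun _ => ((p : ℝ) ^ (-q.1 : ℤ)) ^ (s₁ - 2) * ((p : ℝ) ^ (-q.2 : ℤ)) ^ (s₂ - 1))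
      (fun w hw => by rw [mem_sphere_zero_iff_norm.1 hw.1, mem_sphere_zero_iff_norm.1 hw.2.2]),
    setIntegral_const, cell, measureReal_prod_prod, measureReal_prod_prod,
    addHaar_sphere_pow hμ, addHaar_closedBall_pow hμ, addHaar_sphere_pow hμ, smul_eq_mul,
    zpow_neg_natCast_rpow hp, zpow_neg_natCast_rpow hp, zpow_neg, zpow_neg, zpow_natCast,
    zpow_natCast]
  have h₁ : (p : ℝ) ^ (-s₁) = (p : ℝ) ^ (-(s₁ - 2)) / (p : ℝ) ^ 2 := by
    rw [← Real.rpow_natCast, ← Real.rpow_sub hp]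
    norm_num
  have h₂ : (p : ℝ) ^ (-s₂) = (p : ℝ) ^ (-(s₂ - 1)) / p := by
    rw [← Real.rpow_sub_one hp.ne']
    ring_nf
  rw [h₁, h₂, div_pow, div_pow]
  field_simp [hp.ne']
  ring

end PadicInt

theorem stmt9 (p : ℕ) [Fact p.Prime]
    [MeasurableSpace ℤ_[p]] [BorelSpace ℤ_[p]]
    (μ : Measure ℤ_[p]) [μ.IsAddHaarMeasure] (hμ : μ Set.univ = 1)
    (s₁ s₂ : ℝ) (hs₁ : 2 < s₁) (hs₂ : 2 < s₂)
    (X Y : ℝ) (hX : X = (p : ℝ) ^ (-s₁)) (hY : Y = (p : ℝ) ^ (-s₂)) :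
    ((1 - (p : ℝ)⁻¹) ^ 2)⁻¹ *
      ∫ w in {w : ℤ_[p] × ℤ_[p] × ℤ_[p] | ‖w.2.2‖ ^ 2 ≤ ‖w.1‖ ∧ ‖w.2.1‖ ≤ ‖w.1‖ ∧ ‖w.1‖ < ‖w.2.2‖},
        ‖w.1‖ ^ (s₁ - 2) * ‖w.2.2‖ ^ (s₂ - 1) ∂(μ.prod (μ.prod μ)) =
      X ^ 2 * Y / ((1 - X ^ 2 * Y) * (1 - X * Y)) := by
  have hp : (1 : ℝ) < p := by exact_mod_cast (Fact.out : p.Prime).one_lt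
  have hX₁ : X < 1 := hX ▸ Real.rpow_lt_one_of_one_lt_of_neg hp (by linarith)
  have hY₁ : Y < 1 := hY ▸ Real.rpow_lt_one_of_one_lt_of_neg hp (by linarith)
  have hcont : Continuous fun w : ℤ_[p] × ℤ_[p] × ℤ_[p] =>
      ‖w.1‖ ^ (s₁ - 2) * ‖w.2.2‖ ^ (s₂ - 1) :=
    (continuous_fst.norm.rpow_const fun _ => .inr (by linarith)).mul
      (continuous_snd.snd.norm.rpow_const fun _ => .inr (by linarith))
  have hcells := hasSum_integral_iUnion (μ := μ.prod (μ.prod μ))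
    (fun q => PadicInt.measurableSet_cell (PadicInt.cellIndex q))
    (PadicInt.pairwise_disjoint_cell.comp_of_injective PadicInt.cellIndex_injective)
    (hcont.integrable_of_hasCompactSupport (.of_compactSpace _)).integrableOn
  simp only [← PadicInt.region_eq_iUnion_cell, PadicInt.integral_cell hμ, ← hX, ← hY] at hcells
  have hsum := (PadicInt.hasSum_pow_cellIndex (hX ▸ by positivity) hX₁
    (hY ▸ by positivity) hY₁).mul_left ((1 - (p : ℝ)⁻¹) ^ 2)
  have hq : 1 - (p : ℝ)⁻¹ ≠ 0 := sub_ne_zero.2 (inv_lt_one_of_one_lt₀ hp).ne'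
  rw [hcells.unique hsum, inv_mul_cancel_left₀ (pow_ne_zero 2 hq)]
end

section
/- Let p be a prime, s a real number with s > −1, and α ∈ ℤ_p a nonzero element. Then the integral over {z ∈ ℤ_p : ‖α‖ < ‖z‖ ≤ 1} of ‖z‖^s with respect to the normalized Haar measure μ equals ((1 − p⁻¹)/(1 − p^{−s−1}))·(1 − ‖α‖^{s+1}). -/
/-!
The ball `‖z‖ ≤ p^(-n)` is the kernel of `ℤ_[p] → ZMod (p ^ n)`, an additive subgroup of index
`p ^ n`, so by translation invariance it has measure `p^(-n)`; hence the sphere `‖z‖ = p^(-k)` has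
measure `(1 - p⁻¹) p^(-k)`. The region `‖α‖ < ‖z‖ ≤ 1` is the disjoint union of these spheres for
`k < v(α)`, and `‖z‖ ^ s` is constant on each, so the integral is the geometric sum
`(1 - p⁻¹) ∑_{k < v(α)} r^k` with `r = p^(-s-1) < 1`, while `‖α‖ ^ (s + 1) = r ^ v(α)`.
-/

open MeasureTheory ENNReal Set

namespace PadicInt

variable {p : ℕ} [hp : Fact p.Prime]

theorem setOf_norm_eq_zpow_eq_sdiff (k : ℕ) :
    {z : ℤ_[p] | ‖z‖ = (p : ℝ) ^ (-k : ℤ)} =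
      {z | ‖z‖ ≤ (p : ℝ) ^ (-k : ℤ)} \ {z | ‖z‖ ≤ (p : ℝ) ^ (-(k + 1 : ℕ) : ℤ)} := by
  ext z
  have hk : (-(k + 1 : ℕ) : ℤ) + 1 = -k := by push_cast; ring
  simp only [mem_sdiff, mem_ofPred_eq, norm_le_pow_iff_norm_lt_pow_add_one z (-(k + 1 : ℕ)), hk,
    not_lt, le_antisymm_iff]

theorem setOf_zpow_lt_norm_eq_biUnion (n : ℕ) :
    {z : ℤ_[p] | (p : ℝ) ^ (-n : ℤ) < ‖z‖} =
      ⋃ k ∈ Finset.range n, {z : ℤ_[p] | ‖z‖ = (p : ℝ) ^ (-k : ℤ)} := by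
  ext z
  simp only [mem_ofPred_eq, mem_iUnion, Finset.mem_range, exists_prop]
  have hp1 : (1 : ℝ) < p := mod_cast hp.out.one_lt
  constructor
  · intro h
    have hz : z ≠ 0 := by
      rintro rfl
      exact (norm_zero (E := ℤ_[p]) ▸ h).not_ge (by positivity)
    rw [norm_eq_zpow_neg_valuation hz] at h ⊢
    exact ⟨_, by simpa using (zpow_lt_zpow_iff_right₀ hp1).1 h, rfl⟩
  · rintro ⟨k, hk, hz⟩
    rw [hz]
    exact zpow_lt_zpow_right₀ hp1 (by omega)

section Measure

variable [MeasurableSpace ℤ_[p]] [BorelSpace ℤ_[p]] (μ : Measure ℤ_[p])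

theorem pow_mul_measure_norm_le_zpow [μ.IsAddLeftInvariant] (n : ℕ) :
    (p : ℝ≥0∞) ^ n * μ {z : ℤ_[p] | ‖z‖ ≤ (p : ℝ) ^ (-n : ℤ)} = μ univ := by
  let H := (toZModPow (p := p) n).toAddMonoidHom.ker
  have hH : (H : Set ℤ_[p]) = {z | ‖z‖ ≤ (p : ℝ) ^ (-n : ℤ)} := by
    ext z
    rw [mem_ofPred_eq, norm_le_pow_iff_mem_span_pow, ← ker_toZModPow]
    rfl
  have hindex : H.index = p ^ n := by
    rw [AddSubgroup.index_ker, AddMonoidHom.range_eq_top.2 (ZMod.ringHom_surjective _),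
      AddSubgroup.card_top, Nat.card_zmod]
  have : H.FiniteIndex := ⟨by rw [hindex]; exact pow_ne_zero _ hp.out.ne_zero⟩
  have hmeas : MeasurableSet (H : Set ℤ_[p]) :=
    hH ▸ (isClosed_le continuous_norm continuous_const).measurableSet
  simpa [hH, hindex] using H.index_mul_measure hmeas μ

theorem measureReal_norm_le_zpow [IsFiniteMeasure μ] [μ.IsAddLeftInvariant] (n : ℕ) :
    μ.real {z : ℤ_[p] | ‖z‖ ≤ (p : ℝ) ^ (-n : ℤ)} = (p : ℝ) ^ (-n : ℤ) * μ.real univ := by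
  have h := congrArg ENNReal.toReal (pow_mul_measure_norm_le_zpow μ n)
  rw [ENNReal.toReal_mul, toReal_pow, toReal_natCast, ← measureReal_def, ← measureReal_def] at h
  have hp0 : (p : ℝ) ^ n ≠ 0 := pow_ne_zero _ (Nat.cast_ne_zero.2 hp.out.ne_zero)
  rw [← h, zpow_neg, zpow_natCast, ← mul_assoc, inv_mul_cancel₀ hp0, one_mul]

theorem measurableSet_norm_eq (r : ℝ) : MeasurableSet {z : ℤ_[p] | ‖z‖ = r} :=
  (isClosed_eq continuous_norm continuous_const).measurableSet

theorem measureReal_norm_eq_zpow [IsFiniteMeasure μ] [μ.IsAddLeftInvariant] (k : ℕ) :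
    μ.real {z : ℤ_[p] | ‖z‖ = (p : ℝ) ^ (-k : ℤ)} =
      (1 - (p : ℝ)⁻¹) * (p : ℝ) ^ (-k : ℤ) * μ.real univ := by
  have hsub : {z : ℤ_[p] | ‖z‖ ≤ (p : ℝ) ^ (-(k + 1 : ℕ) : ℤ)} ⊆
      {z | ‖z‖ ≤ (p : ℝ) ^ (-k : ℤ)} := fun z (hz : ‖z‖ ≤ _) =>
    hz.trans (zpow_le_zpow_right₀ (Nat.one_le_cast.2 hp.out.one_le) (by omega))
  rw [setOf_norm_eq_zpow_eq_sdiff, measureReal_sdiff hsub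
      (isClosed_le continuous_norm continuous_const).measurableSet,
    measureReal_norm_le_zpow, measureReal_norm_le_zpow]
  have hp0 : (p : ℝ) ≠ 0 := Nat.cast_ne_zero.2 hp.out.ne_zero
  push_cast
  rw [neg_add, zpow_add₀ hp0, zpow_neg_one]
  ring

theorem integrableOn_comp_norm_eq [IsFiniteMeasure μ] (f : ℝ → ℝ) (r : ℝ) :
    IntegrableOn (fun z : ℤ_[p] => f ‖z‖) {z | ‖z‖ = r} μ :=
  (integrableOn_const (C := f r) (measure_ne_top μ _)).congr_fun
    (fun z (hz : ‖z‖ = r) => by rw [hz]) (measurableSet_norm_eq r)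

theorem setIntegral_comp_norm_eq (f : ℝ → ℝ) (r : ℝ) :
    ∫ z in {z : ℤ_[p] | ‖z‖ = r}, f ‖z‖ ∂μ = μ.real {z : ℤ_[p] | ‖z‖ = r} * f r := by
  rw [setIntegral_congr_fun (measurableSet_norm_eq r)
    (fun z hz => congrArg f (hz : ‖z‖ = r) : EqOn (fun z : ℤ_[p] => f ‖z‖) (fun _ => f r) _),
    setIntegral_const, smul_eq_mul]

theorem setIntegral_comp_norm_zpow_lt [IsFiniteMeasure μ] [μ.IsAddLeftInvariant]
    (f : ℝ → ℝ) (n : ℕ) :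
    ∫ z in {z : ℤ_[p] | (p : ℝ) ^ (-n : ℤ) < ‖z‖}, f ‖z‖ ∂μ =
      (1 - (p : ℝ)⁻¹) * μ.real univ *
        ∑ k ∈ Finset.range n, f ((p : ℝ) ^ (-k : ℤ)) * (p : ℝ) ^ (-k : ℤ) := by
  have hp1 : (1 : ℝ) < p := mod_cast hp.out.one_lt
  have hdisj : (Finset.range n : Set ℕ).Pairwise
      (Function.onFun Disjoint fun k : ℕ => {z : ℤ_[p] | ‖z‖ = (p : ℝ) ^ (-k : ℤ)}) :=
    fun a _ b _ hab => disjoint_left.2 fun z (ha : ‖z‖ = _) (hb : ‖z‖ = _) =>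
      hab (by simpa using zpow_right_injective₀ (by positivity) hp1.ne' (ha.symm.trans hb))
  rw [setOf_zpow_lt_norm_eq_biUnion,
    integral_biUnion_finset _ (fun k _ => measurableSet_norm_eq _) hdisj
      (fun k _ => integrableOn_comp_norm_eq μ f _), Finset.mul_sum]
  refine Finset.sum_congr rfl fun k _ => ?_
  rw [setIntegral_comp_norm_eq, measureReal_norm_eq_zpow]
  ring

end Measure

end PadicInt

theorem Real.zpow_neg_rpow {x : ℝ} (hx : 0 < x) (n : ℕ) (t : ℝ) :
    (x ^ (-n : ℤ)) ^ t = (x ^ (-t)) ^ n := by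
  rw [zpow_neg, zpow_natCast, Real.inv_rpow (by positivity), Real.rpow_neg hx.le, inv_pow,
    ← Real.rpow_natCast_mul hx.le, ← Real.rpow_mul_natCast hx.le, mul_comm]

theorem stmt11 (p : ℕ) [Fact p.Prime]
    [MeasurableSpace ℤ_[p]] [BorelSpace ℤ_[p]]
    (μ : Measure ℤ_[p]) [μ.IsAddHaarMeasure] (hμ : μ Set.univ = 1)
    (s : ℝ) (hs : -1 < s) (α : ℤ_[p]) (hα : α ≠ 0) :
    ∫ z in {z : ℤ_[p] | ‖α‖ < ‖z‖ ∧ ‖z‖ ≤ 1}, ‖z‖ ^ s ∂μ =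
      (1 - (p : ℝ)⁻¹) / (1 - (p : ℝ) ^ (-s - 1)) * (1 - ‖α‖ ^ (s + 1)) := by
  have hp0 : (0 : ℝ) < p := Nat.cast_pos.2 (Fact.out : p.Prime).pos
  have hr : (p : ℝ) ^ (-s - 1) < 1 :=
    Real.rpow_lt_one_of_one_lt_of_neg (Nat.one_lt_cast.2 (Fact.out : p.Prime).one_lt) (by linarith)
  have hset : {z : ℤ_[p] | ‖α‖ < ‖z‖ ∧ ‖z‖ ≤ 1} =
      {z | (p : ℝ) ^ (-α.valuation : ℤ) < ‖z‖} := by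
    simp only [PadicInt.norm_le_one, and_true, PadicInt.norm_eq_zpow_neg_valuation hα]
  have hterm (k : ℕ) :
      ((p : ℝ) ^ (-k : ℤ)) ^ s * (p : ℝ) ^ (-k : ℤ) = ((p : ℝ) ^ (-s - 1)) ^ k := by
    rw [← Real.rpow_add_one (zpow_pos hp0 _).ne', Real.zpow_neg_rpow hp0, neg_add']
  rw [hset, PadicInt.setIntegral_comp_norm_zpow_lt μ (· ^ s), measureReal_def, hμ,
    ENNReal.toReal_one, mul_one,
    Finset.sum_congr rfl fun k _ => hterm k, geom_sum_eq hr.ne,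
    PadicInt.norm_eq_zpow_neg_valuation hα, Real.zpow_neg_rpow hp0, neg_add']
  field_simp [(sub_pos.2 hr).ne', (sub_neg.2 hr).ne]
  ring
end

section
/- Let p be a prime and, for each integer e ≥ 0, let a_{p^e} denote the number of (unital) subrings of R = ℤ[t]/(t³) of additive index p^e. Then in the formal power series ring ℤ⟦Z⟧ one has (∑_{e ≥ 0} a_{p^e} Z^e) · (1 − Z)(1 − p²Z³) = 1 + pZ². -/
open Polynomial

/-- `R = ℤ[t]/(t³)`. -/
abbrev R3 : Type := ℤ[X] ⧸ Ideal.span ({X ^ 3} : Set ℤ[X])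

/-- The number of unital subrings of `ℤ[t]/(t³)` of additive index `n`. -/
noncomputable def numSubrings (n : ℕ) : ℕ :=
  Nat.card {S : Subring R3 // S.toAddSubgroup.index = n}

/-!
A unital subring `S` of `R = ℤ ⊕ ℤt ⊕ ℤt²` is determined by three numbers: the generator `a ≥ 0`
of the group of `t`-coefficients of `S`, the generator `d ≥ 0` of `{β | βt² ∈ S}`, and the
`t²`-coefficient `c` of an element `at + ct² ∈ S`, which matters only modulo `d`. Then
`S = ℤ + ℤ(at + ct²) + ℤdt²`, and `d ∣ a²` because `(at + ct²)² = a²t²`; conversely each such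
triple gives a subring, of index `ad`. So the number of subrings of index `n` is
`∑_{ad = n, d ∣ a²} d`, which for `n = pᵉ` is `sₑ = ∑_{j ≤ 2e/3} pʲ`. These partial sums satisfy
`sₑ₊₃ = 1 + p + p² sₑ`, and this recursion is the stated identity of power series.
-/

theorem Int.exists_forall_mem_iff_natCast_dvd (H : AddSubgroup ℤ) :
    ∃ a : ℕ, ∀ x, x ∈ H ↔ (a : ℤ) ∣ x := by
  obtain ⟨a, rfl⟩ := Int.subgroup_cyclic H
  exact ⟨a.natAbs, fun x => by
    rw [← AddSubgroup.zmultiples_eq_closure, ← Int.zmultiples_natAbs, Int.mem_zmultiples_iff]⟩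

theorem Matrix.index_range_toLin {ι M : Type*} [Fintype ι] [DecidableEq ι] [AddCommGroup M]
    (b : Module.Basis ι ℤ M) (A : Matrix ι ι ℤ) (hA : A.det ≠ 0) :
    (LinearMap.range (A.toLin b b)).toAddSubgroup.index = A.det.natAbs := by
  have : Module.Free ℤ M := .of_basis b
  have : Module.Finite ℤ M := .of_basis b
  have hinj : Function.Injective (A.toLin b b) := by
    rw [← LinearMap.ker_eq_bot, LinearMap.ker_eq_bot']
    intro x hx
    rw [Matrix.toLin_apply_eq_zero_iff] at hx
    have : A.mulVec (b.repr x) = A.mulVec 0 := by ext j; simpa using hx j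
    simpa using A.mulVec_injective_of_det_ne_zero hA this
  rw [← LinearMap.det_toLin b A]
  exact (Submodule.natAbs_det_equiv _ (LinearEquiv.ofInjective _ hinj)).symm

theorem Nat.sum_divisorsAntidiagonal_prime_pow_filter_dvd_sq {p : ℕ} (hp : p.Prime) (e : ℕ) :
    ∑ x ∈ (p ^ e).divisorsAntidiagonal with x.2 ∣ x.1 ^ 2, x.2 =
      ∑ j ∈ Finset.range (2 * e / 3 + 1), p ^ j := by
  rw [Finset.sum_filter, Nat.sum_divisorsAntidiagonal (fun a d => if d ∣ a ^ 2 then d else 0),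
    Nat.sum_divisors_prime_pow hp, ← Finset.sum_range_reflect]
  have hrange : Finset.range (2 * e / 3 + 1) = {j ∈ Finset.range (e + 1) | 3 * j ≤ 2 * e} := by
    ext j; simp; omega
  rw [hrange, Finset.sum_filter]
  refine Finset.sum_congr rfl fun j hj => ?_
  rw [Finset.mem_range] at hj
  rw [Nat.pow_div (by omega) hp.pos, show e - (e + 1 - 1 - j) = j by omega, ← pow_mul]
  simp only [Nat.pow_dvd_pow_iff_le_right hp.one_lt]
  exact if_congr (by omega) rfl rfl

namespace PowerSeries

theorem mk_sum_range_two_mul_div_three_mul {A : Type*} [CommRing A] (q : A) :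
    mk (fun e => ∑ j ∈ Finset.range (2 * e / 3 + 1), q ^ j) *
      ((1 - X) * (1 - C q ^ 2 * X ^ 3)) = 1 + C q * X ^ 2 := by
  set s : ℕ → A := fun e => ∑ j ∈ Finset.range (2 * e / 3 + 1), q ^ j
  have hs : ∀ e, s (e + 3) = 1 + q + q ^ 2 * s e := by
    intro e
    simp only [s]
    rw [show 2 * (e + 3) / 3 + 1 = 2 * e / 3 + 1 + 2 by omega, Finset.sum_range_succ',
      Finset.sum_range_succ', Finset.mul_sum]
    ring_nf
  have hexpand : mk s * ((1 - X) * (1 - C q ^ 2 * X ^ 3)) =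
      mk s - mk s * X ^ 1 - C (q ^ 2) * (mk s * X ^ 3) + C (q ^ 2) * (mk s * X ^ 4) := by
    rw [map_pow]; ring
  rw [hexpand]
  ext n
  simp only [map_sub, map_add, coeff_C_mul, coeff_mul_X_pow', coeff_mk, coeff_one]
  match n with
  | 0 | 1 | 2 | 3 => simp [s, Finset.sum_range_succ]
  | n + 4 =>
    simp only [show n + 4 - 1 = n + 3 by omega, show n + 4 - 3 = n + 1 by omega,
      le_add_iff_nonneg_left, zero_le, ↓reduceIte, add_tsub_cancel_right, Nat.add_eq_zero_iff,
      OfNat.ofNat_ne_zero, and_false, Nat.reduceSubDiff, coeff_succ_C, add_zero]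
    linear_combination hs (n + 1) - hs n

end PowerSeries

namespace R3

noncomputable def t : R3 := Ideal.Quotient.mk _ X

lemma t_pow_three : t ^ 3 = 0 := by
  rw [t, ← map_pow, Ideal.Quotient.eq_zero_iff_mem]
  exact Ideal.mem_span_singleton_self _

noncomputable def basis : Module.Basis (Fin 3) ℤ R3 :=
  (AdjoinRoot.powerBasis' (monic_X_pow 3)).basis.reindex (finCongr (natDegree_X_pow 3))

lemma basis_apply (i : Fin 3) : basis i = t ^ (i : ℕ) := by
  unfold basis
  erw [Module.Basis.reindex_apply, PowerBasis.basis_eq_pow, AdjoinRoot.powerBasis'_gen]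
  rfl

noncomputable def ofCoeffs (m a b : ℤ) : R3 := m + a * t + b * t ^ 2

lemma basis_equivFun_symm (v : Fin 3 → ℤ) :
    basis.equivFun.symm v = ofCoeffs (v 0) (v 1) (v 2) := by
  simp [Module.Basis.equivFun_symm_apply, Fin.sum_univ_three, basis_apply, ofCoeffs, zsmul_eq_mul]

lemma basis_equivFun_ofCoeffs (m a b : ℤ) : basis.equivFun (ofCoeffs m a b) = ![m, a, b] := by
  rw [← basis.equivFun.apply_symm_apply ![m, a, b], basis_equivFun_symm]
  rfl

lemma exists_eq_ofCoeffs (x : R3) : ∃ m a b : ℤ, x = ofCoeffs m a b :=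
  ⟨_, _, _, by rw [← basis_equivFun_symm, LinearEquiv.symm_apply_apply]⟩

lemma ofCoeffs_inj {m a b m' a' b' : ℤ} :
    ofCoeffs m a b = ofCoeffs m' a' b' ↔ m = m' ∧ a = a' ∧ b = b' := by
  rw [← basis.equivFun.injective.eq_iff, basis_equivFun_ofCoeffs, basis_equivFun_ofCoeffs]
  simp

lemma intCast_eq_ofCoeffs (n : ℤ) : (n : R3) = ofCoeffs n 0 0 := by simp [ofCoeffs]

lemma ofCoeffs_sub (m a b m' a' b' : ℤ) :
    ofCoeffs m a b - ofCoeffs m' a' b' = ofCoeffs (m - m') (a - a') (b - b') := by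
  simp only [ofCoeffs]; push_cast; ring

lemma ofCoeffs_mul (m a b m' a' b' : ℤ) :
    ofCoeffs m a b * ofCoeffs m' a' b' =
      ofCoeffs (m * m') (m * a' + a * m') (m * b' + a * a' + b * m') := by
  simp only [ofCoeffs]; push_cast
  linear_combination (a * b' + b * a' + b * b' * t : R3) * t_pow_three

noncomputable def linearCoeff : R3 →+ ℤ := (basis.coord 1).toAddMonoidHom

@[simp] lemma linearCoeff_ofCoeffs (m a b : ℤ) : linearCoeff (ofCoeffs m a b) = a := by
  simp [linearCoeff, ← Module.Basis.equivFun_apply, basis_equivFun_ofCoeffs]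

def latticeMatrix (a c d : ℤ) : Matrix (Fin 3) (Fin 3) ℤ := !![1, 0, 0; 0, a, 0; 0, c, d]

-- `ℤ + ℤ(at + ct²) + ℤdt²`: the columns of `latticeMatrix a c d` are the coordinates of its
-- generators in the basis `1, t, t²`.
noncomputable def lattice (a c d : ℤ) : AddSubgroup R3 :=
  (LinearMap.range ((latticeMatrix a c d).toLin basis basis)).toAddSubgroup

lemma toLin_latticeMatrix_ofCoeffs (a c d m k l : ℤ) :
    (latticeMatrix a c d).toLin basis basis (ofCoeffs m k l) =
      ofCoeffs m (a * k) (c * k + d * l) := by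
  rw [Matrix.toLin_apply, ← Module.Basis.equivFun_apply, basis_equivFun_ofCoeffs,
    ← Module.Basis.equivFun_symm_apply, basis_equivFun_symm]
  simp [latticeMatrix, Matrix.mulVec, dotProduct, Fin.sum_univ_three]

lemma ofCoeffs_mem_lattice {a c d m α β : ℤ} :
    ofCoeffs m α β ∈ lattice a c d ↔ ∃ k l : ℤ, α = a * k ∧ β = c * k + d * l := by
  simp only [lattice, Submodule.mem_toAddSubgroup, LinearMap.mem_range]
  constructor
  · rintro ⟨y, hy⟩
    obtain ⟨m', k, l, rfl⟩ := exists_eq_ofCoeffs y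
    rw [toLin_latticeMatrix_ofCoeffs, ofCoeffs_inj] at hy
    exact ⟨k, l, hy.2.1.symm, hy.2.2.symm⟩
  · rintro ⟨k, l, rfl, rfl⟩
    exact ⟨ofCoeffs m k l, toLin_latticeMatrix_ofCoeffs ..⟩

lemma index_lattice {a c d : ℤ} (ha : a ≠ 0) (hd : d ≠ 0) :
    (lattice a c d).index = (a * d).natAbs := by
  rw [lattice, Matrix.index_range_toLin]
  · simp [latticeMatrix, Matrix.det_fin_three]
  · simp [latticeMatrix, Matrix.det_fin_three, ha, hd]

lemma index_lattice_zero (c d : ℤ) : (lattice 0 c d).index = 0 := by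
  have hle : lattice 0 c d ≤ linearCoeff.ker := by
    intro x hx
    obtain ⟨m, α, β, rfl⟩ := exists_eq_ofCoeffs x
    obtain ⟨k, l, rfl, -⟩ := ofCoeffs_mem_lattice.mp hx
    simp
  have hsurj : Function.Surjective linearCoeff := fun α => ⟨ofCoeffs 0 α 0, linearCoeff_ofCoeffs ..⟩
  have : linearCoeff.ker.index = 0 := by
    rw [AddSubgroup.index_ker, AddMonoidHom.range_eq_top.mpr hsurj, AddSubgroup.card_top]
    exact Nat.card_eq_zero_of_infinite
  simpa [this] using AddSubgroup.index_dvd_of_le hle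

noncomputable def latticeSubring (a c d : ℤ) (h : d ∣ a ^ 2) : Subring R3 :=
  { lattice a c d with
    one_mem' := by
      rw [show (1 : R3) = ofCoeffs 1 0 0 by simp [ofCoeffs]]
      exact ofCoeffs_mem_lattice.mpr ⟨0, 0, by ring, by ring⟩
    mul_mem' := by
      intro x y hx hy
      obtain ⟨m, α, β, rfl⟩ := exists_eq_ofCoeffs x
      obtain ⟨m', α', β', rfl⟩ := exists_eq_ofCoeffs y
      obtain ⟨k, l, rfl, rfl⟩ := ofCoeffs_mem_lattice.mp hx
      obtain ⟨k', l', rfl, rfl⟩ := ofCoeffs_mem_lattice.mp hy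
      obtain ⟨w, hw⟩ := h
      rw [ofCoeffs_mul]
      exact ofCoeffs_mem_lattice.mpr ⟨m * k' + k * m', m * l' + l * m' + w * k * k', by ring,
        by linear_combination k * k' * hw⟩ }

lemma latticeSubring_toAddSubgroup (a c d : ℤ) (h : d ∣ a ^ 2) :
    (latticeSubring a c d h).toAddSubgroup = lattice a c d := rfl

theorem exists_toAddSubgroup_eq_lattice (S : Subring R3) :
    ∃ (a d : ℕ) (c : ℤ), (d : ℤ) ∣ (a : ℤ) ^ 2 ∧ S.toAddSubgroup = lattice a c d := by
  obtain ⟨a, ha⟩ := Int.exists_forall_mem_iff_natCast_dvd (S.toAddSubgroup.map linearCoeff)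
  obtain ⟨d, hd⟩ := Int.exists_forall_mem_iff_natCast_dvd
    (S.toAddSubgroup.comap ((AddMonoidHom.mulRight (t ^ 2)).comp (Int.castAddHom R3)))
  have hD : ∀ β, ofCoeffs 0 0 β ∈ S ↔ (d : ℤ) ∣ β := fun β => by
    rw [← hd]; simp [ofCoeffs]
  obtain ⟨x, hxS, hx⟩ := (ha a).mpr dvd_rfl
  obtain ⟨m, a', c, rfl⟩ := exists_eq_ofCoeffs x
  rw [linearCoeff_ofCoeffs] at hx
  subst hx
  have hw : ofCoeffs 0 a c ∈ S := by
    simpa [intCast_eq_ofCoeffs, ofCoeffs_sub] using S.sub_mem hxS (intCast_mem S m)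
  have hsq : (d : ℤ) ∣ (a : ℤ) ^ 2 := (hD _).mp (by simpa [ofCoeffs_mul, sq] using S.mul_mem hw hw)
  refine ⟨a, d, c, hsq, ?_⟩
  ext x
  obtain ⟨m, α, β, rfl⟩ := exists_eq_ofCoeffs x
  rw [Subring.mem_toAddSubgroup, ofCoeffs_mem_lattice]
  constructor
  · intro hx
    obtain ⟨k, rfl⟩ := (ha α).mp ⟨_, hx, linearCoeff_ofCoeffs ..⟩
    have hrest : ofCoeffs m (a * k) β - m - k * ofCoeffs 0 a c = ofCoeffs 0 0 (β - c * k) := by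
      simp only [ofCoeffs]; push_cast; ring
    obtain ⟨l, hl⟩ := (hD _).mp
      (hrest ▸ S.sub_mem (S.sub_mem hx (intCast_mem S m)) (S.mul_mem (intCast_mem S k) hw))
    exact ⟨k, l, rfl, by linear_combination hl⟩
  · rintro ⟨k, l, rfl, rfl⟩
    have hsum :
        ofCoeffs m (a * k) (c * k + d * l) = m + k * ofCoeffs 0 a c + l * ofCoeffs 0 0 d := by
      simp only [ofCoeffs]; push_cast; ring
    rw [hsum]
    exact S.add_mem (S.add_mem (intCast_mem S m) (S.mul_mem (intCast_mem S k) hw))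
      (S.mul_mem (intCast_mem S l) ((hD d).mpr dvd_rfl))

lemma ofCoeffs_mem_lattice_self {a c d : ℤ} : ofCoeffs 0 a c ∈ lattice a c d :=
  ofCoeffs_mem_lattice.mpr ⟨1, 0, by ring, by ring⟩

lemma ofCoeffs_zero_zero_mem_lattice {a c d β : ℤ} (ha : a ≠ 0) :
    ofCoeffs 0 0 β ∈ lattice a c d ↔ d ∣ β := by
  rw [ofCoeffs_mem_lattice]
  constructor
  · rintro ⟨k, l, hk, rfl⟩
    obtain rfl : k = 0 := by simpa [ha] using hk.symm
    simp
  · rintro ⟨l, rfl⟩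
    exact ⟨0, l, by ring, by ring⟩

lemma lattice_eq_lattice_iff {a d a' d' : ℕ} {c c' : ℤ} (ha : a ≠ 0) :
    lattice a c d = lattice a' c' d' ↔ a = a' ∧ d = d' ∧ (d : ℤ) ∣ c - c' := by
  constructor
  · intro h
    obtain ⟨k, l, hak, hc⟩ := ofCoeffs_mem_lattice.mp (h ▸ ofCoeffs_mem_lattice_self)
    obtain ⟨k', -, hak', -⟩ := ofCoeffs_mem_lattice.mp (h.symm ▸ ofCoeffs_mem_lattice_self)
    obtain rfl : a = a' := Nat.dvd_antisymm (Int.natCast_dvd_natCast.mp ⟨k', hak'⟩)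
      (Int.natCast_dvd_natCast.mp ⟨k, hak⟩)
    obtain rfl : k = 1 := by simpa [ha] using hak.symm
    have hd : ∀ {c₁ c₂ : ℤ} {d₁ d₂ : ℕ}, lattice a c₁ d₁ = lattice a c₂ d₂ → d₂ ∣ d₁ := fun h =>
      Int.natCast_dvd_natCast.mp ((ofCoeffs_zero_zero_mem_lattice (by exact_mod_cast ha)).mp
        (h ▸ (ofCoeffs_zero_zero_mem_lattice (by exact_mod_cast ha)).mpr dvd_rfl))
    obtain rfl : d = d' := Nat.dvd_antisymm (hd h.symm) (hd h)
    exact ⟨rfl, rfl, l, by linear_combination hc⟩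
  · rintro ⟨rfl, rfl, w, hw⟩
    ext x
    obtain ⟨m, α, β, rfl⟩ := exists_eq_ofCoeffs x
    simp only [ofCoeffs_mem_lattice]
    constructor
    · rintro ⟨k, l, rfl, rfl⟩
      exact ⟨k, l + w * k, rfl, by linear_combination k * hw⟩
    · rintro ⟨k, l, rfl, rfl⟩
      exact ⟨k, l - w * k, rfl, by linear_combination -k * hw⟩

def subringParams (n : ℕ) : Finset (Σ _ : ℕ × ℕ, ℕ) :=
  {x ∈ n.divisorsAntidiagonal | x.2 ∣ x.1 ^ 2}.sigma fun x => Finset.range x.2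

lemma mem_subringParams {n a d c : ℕ} :
    (⟨(a, d), c⟩ : Σ _ : ℕ × ℕ, ℕ) ∈ subringParams n ↔
      (a * d = n ∧ n ≠ 0) ∧ d ∣ a ^ 2 ∧ c < d := by
  simp [subringParams, and_assoc]

noncomputable def subringOfParams (n : ℕ) :
    subringParams n → {S : Subring R3 // S.toAddSubgroup.index = n}
  | ⟨⟨(a, d), c⟩, hx⟩ =>
    have hx := mem_subringParams.mp hx
    ⟨latticeSubring a c d (by exact_mod_cast hx.2.1), by
      obtain ⟨ha, hd⟩ := Nat.mul_ne_zero_iff.mp (hx.1.1 ▸ hx.1.2 :)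
      rw [latticeSubring_toAddSubgroup, index_lattice (by exact_mod_cast ha) (by exact_mod_cast hd),
        ← hx.1.1, ← Int.natCast_mul, Int.natAbs_natCast]⟩

lemma subringOfParams_bijective (n : ℕ) (hn : n ≠ 0) : Function.Bijective (subringOfParams n) := by
  constructor
  · rintro ⟨⟨⟨a, d⟩, c⟩, hx⟩ ⟨⟨⟨a', d'⟩, c'⟩, hx'⟩ h
    have hx := mem_subringParams.mp hx
    have hx' := mem_subringParams.mp hx'
    have ha : a ≠ 0 := by rintro rfl; exact hx.1.2 (by simp [← hx.1.1])
    obtain ⟨rfl, rfl, hc⟩ := (lattice_eq_lattice_iff ha).mp (congrArg (·.1.toAddSubgroup) h)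
    obtain rfl : c = c' := by
      have := Int.eq_zero_of_abs_lt_dvd hc (by rw [abs_lt]; omega)
      omega
    rfl
  · rintro ⟨S, hS⟩
    obtain ⟨a, d, c, hdvd, hSL⟩ := exists_toAddSubgroup_eq_lattice S
    have ha : a ≠ 0 := by
      rintro rfl
      exact hn (by simpa [hSL, index_lattice_zero] using hS.symm)
    have hd : d ≠ 0 := by
      rintro rfl
      simp_all
    have hd' : (0 : ℤ) < d := by omega
    rw [hSL, index_lattice (by simpa) (by simpa)] at hS
    refine ⟨⟨⟨(a, d), (c % d).toNat⟩, mem_subringParams.mpr ⟨⟨?_, hn⟩, ?_, ?_⟩⟩, ?_⟩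
    · simpa [← hS] using (Int.natAbs_mul a d).symm
    · exact_mod_cast hdvd
    · have := Int.emod_lt_of_pos c hd'
      omega
    · apply Subtype.ext
      apply Subring.toAddSubgroup_injective
      rw [hSL]
      refine (lattice_eq_lattice_iff ha).mpr ⟨rfl, rfl, -(c / d), ?_⟩
      rw [Int.toNat_of_nonneg (Int.emod_nonneg c hd'.ne'), Int.emod_def]
      ring

theorem numSubrings_eq_sum (n : ℕ) (hn : n ≠ 0) :
    numSubrings n = ∑ x ∈ n.divisorsAntidiagonal with x.2 ∣ x.1 ^ 2, x.2 := by
  rw [numSubrings, ← Nat.card_congr (Equiv.ofBijective _ (subringOfParams_bijective n hn)),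
    Nat.card_eq_finsetCard, subringParams, Finset.card_sigma]
  simp

end R3

theorem stmt13 (p : ℕ) (hp : p.Prime) :
    (PowerSeries.mk fun e : ℕ => (numSubrings (p ^ e) : ℤ)) *
      ((1 - PowerSeries.X) * (1 - (p : PowerSeries ℤ) ^ 2 * PowerSeries.X ^ 3)) =
    1 + (p : PowerSeries ℤ) * PowerSeries.X ^ 2 := by
  have hcoeff : (PowerSeries.mk fun e : ℕ => (numSubrings (p ^ e) : ℤ)) =
      PowerSeries.mk fun e => ∑ j ∈ Finset.range (2 * e / 3 + 1), (p : ℤ) ^ j := by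
    ext e
    simp [R3.numSubrings_eq_sum _ (pow_ne_zero e hp.ne_zero),
      Nat.sum_divisorsAntidiagonal_prime_pow_filter_dvd_sq hp]
  rw [hcoeff, ← map_natCast (PowerSeries.C (R := ℤ)) p]
  exact PowerSeries.mk_sum_range_two_mul_div_three_mul (p : ℤ)
end
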